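/- arXiv:1206.4923 — 9 statements merged into one kernel-verified Lean document; each statement's English description precedes it below -/
import Mathlib

section
/- Let V and W be complex inner product spaces and equip V × W with the orthogonal direct-sum inner product. For every nonzero x ∈ V, every y ∈ W, and every nonzero z ∈ V, one has d_g((x,y),(x,0)) ≤ d_g((x,y),(z,0)); that is, among all lines contained in V × {0}, the line through (x,0) is a closest line to the line through (x,y) in the Fubini–Study distance. -/
/-- The Fubini–Study distance between the lines through two vectors of a
complex inner product space. -/
noncomputable def fsDist {E : Type*} [NormedAddCommGroup E] [InnerProductSpace ℂ E]
    (x y : E) : ℝ :=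
  Real.arccos (‖(inner ℂ x y : ℂ)‖ / (‖x‖ * ‖y‖))

/-- Among all lines contained in `V × {0}`, the line through `(x,0)` is a closest
line to the line through `(x,y)` in the Fubini–Study distance on the orthogonal
direct sum `V × W`. -/
theorem fsDist_pair_le {V W : Type*} [NormedAddCommGroup V] [InnerProductSpace ℂ V]
    [NormedAddCommGroup W] [InnerProductSpace ℂ W]
    (x : V) (y : W) (z : V) (hx : x ≠ 0) (hz : z ≠ 0) :
    fsDist ((WithLp.equiv 2 (V × W)).symm (x, y)) ((WithLp.equiv 2 (V × W)).symm (x, 0)) ≤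
      fsDist ((WithLp.equiv 2 (V × W)).symm (x, y)) ((WithLp.equiv 2 (V × W)).symm (z, 0)) := by
  set N : ℝ := ‖(WithLp.equiv 2 (V × W)).symm (x, y)‖ with hN
  have hNpos : 0 < N := by
    rw [hN, norm_pos_iff]
    intro h
    apply hx
    have := congrArg (fun v => ((WithLp.equiv 2 (V × W)) v).1) h
    simpa using this
  unfold fsDist
  have key : ∀ a b : ℝ, a ≤ b → Real.arccos b ≤ Real.arccos a := by
    intro a b hab
    unfold Real.arccos
    have := Real.monotone_arcsin hab
    linarith
  apply key
  have h1 : (inner ℂ ((WithLp.equiv 2 (V × W)).symm (x, y))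
      ((WithLp.equiv 2 (V × W)).symm (x, 0)) : ℂ) = inner ℂ x x := by
    simp [WithLp.prod_inner_apply]
  have h2 : (inner ℂ ((WithLp.equiv 2 (V × W)).symm (x, y))
      ((WithLp.equiv 2 (V × W)).symm (z, 0)) : ℂ) = inner ℂ x z := by
    simp [WithLp.prod_inner_apply]
  have hnx : ‖(WithLp.equiv 2 (V × W)).symm (x, (0:W))‖ = ‖x‖ := by
    rw [WithLp.prod_norm_eq_of_L2]
    simp
  have hnz : ‖(WithLp.equiv 2 (V × W)).symm (z, (0:W))‖ = ‖z‖ := by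
    rw [WithLp.prod_norm_eq_of_L2]
    simp
  rw [h1, h2, hnx, hnz, ← hN]
  have hxx : ‖(inner ℂ x x : ℂ)‖ = ‖x‖ * ‖x‖ := by
    rw [@inner_self_eq_norm_sq_to_K ℂ]
    simp [sq]
  rw [hxx]
  have hcs : ‖(inner ℂ x z : ℂ)‖ ≤ ‖x‖ * ‖z‖ := norm_inner_le_norm x z
  have hzpos : 0 < ‖z‖ := norm_pos_iff.mpr hz
  rw [div_le_div_iff₀ (mul_pos hNpos hzpos) (mul_pos hNpos (norm_pos_iff.mpr hx))]
  calc ‖(inner ℂ x z : ℂ)‖ * (N * ‖x‖) ≤ (‖x‖ * ‖z‖) * (N * ‖x‖) := by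
        apply mul_le_mul_of_nonneg_right hcs (le_of_lt (mul_pos hNpos (norm_pos_iff.mpr hx)))
    _ = ‖x‖ * ‖x‖ * (N * ‖z‖) := by ring
end

section
/- Let V and W be complex inner product spaces, let G be a nonempty group acting on V and on W by ℂ-linear automorphisms, and let v ∈ V and w ∈ W be nonzero. Then the infimum over all pairs (σ,τ) ∈ G × G of the Fubini–Study distance d_g((σ·v, σ·w), (τ·v, 0)) in V × W equals the infimum over σ ∈ G of arctan(‖σ·w‖/‖σ·v‖). Equivalently, the infimum over G of the energy ν_{v,w}(σ) = log‖σ·w‖² − log‖σ·v‖² equals log tan² of the distance between the orbit of the line [(v,w)] and the orbit of the line [(v,0)]. -/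
lemma arccos_div_sqrt_eq_arctan {a b : ℝ} (ha : 0 < a) (hb : 0 < b) :
    Real.arccos (a / Real.sqrt (a ^ 2 + b ^ 2)) = Real.arctan (b / a) := by
  have hN : 0 < Real.sqrt (a ^ 2 + b ^ 2) := Real.sqrt_pos.2 (by positivity)
  have hx : 0 < a / Real.sqrt (a ^ 2 + b ^ 2) := by positivity
  rw [Real.arccos_eq_arctan hx]
  congr 1
  have h1 : 1 - (a / Real.sqrt (a ^ 2 + b ^ 2)) ^ 2 = b ^ 2 / (a ^ 2 + b ^ 2) := by
    rw [div_pow, Real.sq_sqrt (by positivity)]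
    field_simp
    ring
  rw [h1, Real.sqrt_div (by positivity) _, Real.sqrt_sq hb.le]
  field_simp

lemma arccos_antitone' {x y : ℝ} (h : x ≤ y) : Real.arccos y ≤ Real.arccos x := by
  rw [Real.arccos_eq_pi_div_two_sub_arcsin, Real.arccos_eq_pi_div_two_sub_arcsin]
  exact sub_le_sub_left (Real.monotone_arcsin h) _

lemma arctan_nonneg' {x : ℝ} (h : 0 ≤ x) : 0 ≤ Real.arctan x := by
  simpa using Real.arctan_strictMono.monotone h

/-- For a group `G` acting ℂ-linearly on `V` and `W` and nonzero `v ∈ V`, `w ∈ W`,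
the infimum over `(σ,τ) ∈ G × G` of the Fubini–Study distance between the lines
through `(σ·v, σ·w)` and `(τ·v, 0)` equals the infimum over `σ ∈ G` of
`arctan (‖σ·w‖/‖σ·v‖)`; equivalently, the infimum of the energy
`ν_{v,w}(σ) = log‖σ·w‖² − log‖σ·v‖²` equals `log tan²` of the distance between
the two orbits of lines. -/
theorem iInf_energy_eq_log_tan_sq_dist {G V W : Type*} [Group G]
    [NormedAddCommGroup V] [InnerProductSpace ℂ V]
    [NormedAddCommGroup W] [InnerProductSpace ℂ W]
    [DistribMulAction G V] [SMulCommClass G ℂ V]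
    [DistribMulAction G W] [SMulCommClass G ℂ W]
    (v : V) (w : W) (hv : v ≠ 0) (hw : w ≠ 0) :
    ((⨅ p : G × G, fsDist ((WithLp.equiv 2 (V × W)).symm (p.1 • v, p.1 • w))
        ((WithLp.equiv 2 (V × W)).symm (p.2 • v, 0)))
      = ⨅ σ : G, Real.arctan (‖σ • w‖ / ‖σ • v‖)) ∧
    ((⨅ σ : G, (Real.log (‖σ • w‖ ^ 2) - Real.log (‖σ • v‖ ^ 2)))
      = Real.log ((Real.tan (⨅ p : G × G,
          fsDist ((WithLp.equiv 2 (V × W)).symm (p.1 • v, p.1 • w))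
            ((WithLp.equiv 2 (V × W)).symm (p.2 • v, 0)))) ^ 2)) := by
  have hvσ : ∀ σ : G, σ • v ≠ 0 := fun σ h => hv (by
    rw [← inv_smul_smul σ v, h, smul_zero])
  have hwσ : ∀ σ : G, σ • w ≠ 0 := fun σ h => hw (by
    rw [← inv_smul_smul σ w, h, smul_zero])
  have hvpos : ∀ σ : G, 0 < ‖σ • v‖ := fun σ => norm_pos_iff.2 (hvσ σ)
  have hwpos : ∀ σ : G, 0 < ‖σ • w‖ := fun σ => norm_pos_iff.2 (hwσ σ)
  set f : G → ℝ := fun σ => ‖σ • w‖ / ‖σ • v‖ with hf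
  have hfpos : ∀ σ, 0 < f σ := fun σ => div_pos (hwpos σ) (hvpos σ)
  set D : G × G → ℝ := fun p =>
    fsDist ((WithLp.equiv 2 (V × W)).symm (p.1 • v, p.1 • w))
      ((WithLp.equiv 2 (V × W)).symm (p.2 • v, 0)) with hD
  have hDform : ∀ p : G × G, D p = Real.arccos (‖(inner ℂ (p.1 • v) (p.2 • v) : ℂ)‖ /
      (Real.sqrt (‖p.1 • v‖ ^ 2 + ‖p.1 • w‖ ^ 2) * ‖p.2 • v‖)) := by
    intro p
    simp only [hD, fsDist, WithLp.prod_inner_apply, WithLp.equiv_symm_apply, WithLp.toLp_fst,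
      WithLp.toLp_snd, inner_zero_right, add_zero,
      WithLp.prod_norm_eq_of_L2, norm_zero]
    norm_num
  have hDdiag : ∀ σ : G, D (σ, σ) = Real.arctan (f σ) := by
    intro σ
    rw [hDform (σ, σ)]
    have h1 : (inner ℂ (σ • v) (σ • v) : ℂ) = (‖σ • v‖ : ℂ) ^ 2 := inner_self_eq_norm_sq_to_K _
    have h2 : ‖((‖σ • v‖ : ℂ)) ^ 2‖ = ‖σ • v‖ ^ 2 := by simp [norm_pow]
    rw [h1, h2]
    have h3 : ‖σ • v‖ ^ 2 / (Real.sqrt (‖σ • v‖ ^ 2 + ‖σ • w‖ ^ 2) * ‖σ • v‖)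
        = ‖σ • v‖ / Real.sqrt (‖σ • v‖ ^ 2 + ‖σ • w‖ ^ 2) := by
      rw [pow_two, mul_comm (Real.sqrt _) _, mul_div_mul_left _ _ (hvpos σ).ne']
    rw [h3, arccos_div_sqrt_eq_arctan (hvpos σ) (hwpos σ)]
  have hDge : ∀ p : G × G, Real.arctan (f p.1) ≤ D p := by
    intro p
    rw [hDform p, ← arccos_div_sqrt_eq_arctan (hvpos p.1) (hwpos p.1)]
    apply arccos_antitone'
    have hcs : ‖(inner ℂ (p.1 • v) (p.2 • v) : ℂ)‖ ≤ ‖p.1 • v‖ * ‖p.2 • v‖ :=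
      norm_inner_le_norm _ _
    have hNpos : 0 < Real.sqrt (‖p.1 • v‖ ^ 2 + ‖p.1 • w‖ ^ 2) :=
      Real.sqrt_pos.2 (add_pos (pow_pos (hvpos p.1) 2) (pow_pos (hwpos p.1) 2))
    rw [div_le_div_iff₀ (mul_pos hNpos (hvpos p.2)) hNpos]
    calc ‖(inner ℂ (p.1 • v) (p.2 • v) : ℂ)‖ * Real.sqrt (‖p.1 • v‖ ^ 2 + ‖p.1 • w‖ ^ 2)
        ≤ (‖p.1 • v‖ * ‖p.2 • v‖) * Real.sqrt (‖p.1 • v‖ ^ 2 + ‖p.1 • w‖ ^ 2) :=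
          mul_le_mul_of_nonneg_right hcs hNpos.le
      _ = ‖p.1 • v‖ * (Real.sqrt (‖p.1 • v‖ ^ 2 + ‖p.1 • w‖ ^ 2) * ‖p.2 • v‖) := by ring
  have hbddD : BddBelow (Set.range D) := by
    refine ⟨0, ?_⟩; rintro _ ⟨p, rfl⟩; exact Real.arccos_nonneg _
  have hbddA : BddBelow (Set.range fun σ : G => Real.arctan (f σ)) := by
    refine ⟨0, ?_⟩; rintro _ ⟨σ, rfl⟩; exact arctan_nonneg' (hfpos σ).le
  have hpart1 : (⨅ p : G × G, D p) = ⨅ σ : G, Real.arctan (f σ) := by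
    apply le_antisymm
    · apply le_ciInf; intro σ
      calc (⨅ p : G × G, D p) ≤ D (σ, σ) := ciInf_le hbddD _
        _ = Real.arctan (f σ) := hDdiag σ
    · apply le_ciInf; intro p
      calc (⨅ σ : G, Real.arctan (f σ)) ≤ Real.arctan (f p.1) := ciInf_le hbddA _
        _ ≤ D p := hDge p
  refine ⟨hpart1, ?_⟩
  have hbddf : BddBelow (Set.range f) := by
    refine ⟨0, ?_⟩; rintro _ ⟨σ, rfl⟩; exact (hfpos σ).le
  set m : ℝ := ⨅ σ : G, f σ with hm
  have hm0 : 0 ≤ m := le_ciInf fun σ => (hfpos σ).le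
  have hmle : ∀ σ, m ≤ f σ := fun σ => ciInf_le hbddf σ
  have hArctan : (⨅ σ : G, Real.arctan (f σ)) = Real.arctan m := by
    apply le_antisymm
    · set t : ℝ := ⨅ σ : G, Real.arctan (f σ) with ht
      have ht0 : 0 ≤ t := le_ciInf fun σ => arctan_nonneg' (hfpos σ).le
      have htle : ∀ σ, t ≤ Real.arctan (f σ) := fun σ => ciInf_le hbddA σ
      have htlt : t < Real.pi / 2 := lt_of_le_of_lt (htle 1) (Real.arctan_lt_pi_div_two _)
      have htan : Real.tan t ≤ m := by
        apply le_ciInf; intro σ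
        have h4 : Real.tan t ≤ Real.tan (Real.arctan (f σ)) := by
          rcases eq_or_lt_of_le (htle σ) with h | h
          · rw [h]
          · exact le_of_lt (Real.tan_lt_tan_of_lt_of_lt_pi_div_two
              (by linarith [Real.pi_pos]) (Real.arctan_lt_pi_div_two _) h)
        rwa [Real.tan_arctan] at h4
      calc t = Real.arctan (Real.tan t) :=
            (Real.arctan_tan (by linarith [Real.pi_pos]) htlt).symm
        _ ≤ Real.arctan m := Real.arctan_strictMono.monotone htan
    · exact le_ciInf fun σ => Real.arctan_strictMono.monotone (hmle σ)
  have henergy : ∀ σ : G, Real.log (‖σ • w‖ ^ 2) - Real.log (‖σ • v‖ ^ 2)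
      = 2 * Real.log (f σ) := by
    intro σ
    rw [Real.log_pow, Real.log_pow, hf]
    rw [Real.log_div (hwpos σ).ne' (hvpos σ).ne']
    push_cast
    ring
  have hlb : ∀ b : ℝ, (∀ σ, b ≤ 2 * Real.log (f σ)) → Real.exp (b / 2) ≤ m := by
    intro b hb
    apply le_ciInf; intro σ
    have h5 : Real.exp (b / 2) ≤ Real.exp (Real.log (f σ)) :=
      Real.exp_le_exp.2 (by linarith [hb σ])
    rwa [Real.exp_log (hfpos σ)] at h5
  have hRHS : Real.tan (⨅ p : G × G, D p) = m := by
    rw [hpart1, hArctan, Real.tan_arctan]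
  have key : (⨅ σ : G, 2 * Real.log (f σ)) = Real.log (m ^ 2) := by
    rw [Real.log_pow]
    push_cast
    rcases eq_or_lt_of_le hm0 with h0 | hmpos
    · rw [← h0, Real.log_zero, mul_zero]
      apply Real.iInf_of_not_bddBelow
      rintro ⟨b, hb⟩
      have h6 : Real.exp (b / 2) ≤ m := hlb b fun σ => hb ⟨σ, rfl⟩
      rw [← h0] at h6
      exact absurd h6 (not_le.2 (Real.exp_pos _))
    · have hbdd2 : BddBelow (Set.range fun σ : G => 2 * Real.log (f σ)) := by
        refine ⟨2 * Real.log m, ?_⟩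
        rintro _ ⟨σ, rfl⟩
        exact mul_le_mul_of_nonneg_left (Real.log_le_log hmpos (hmle σ)) (by norm_num)
      apply le_antisymm
      · have hb : ∀ σ, (⨅ σ : G, 2 * Real.log (f σ)) ≤ 2 * Real.log (f σ) :=
          fun σ => ciInf_le hbdd2 σ
        have h7 := hlb _ hb
        have hlog : Real.log (Real.exp ((⨅ σ : G, 2 * Real.log (f σ)) / 2)) ≤ Real.log m :=
          Real.log_le_log (Real.exp_pos _) h7
        rw [Real.log_exp] at hlog
        linarith
      · apply le_ciInf; intro σ
        exact mul_le_mul_of_nonneg_left (Real.log_le_log hmpos (hmle σ)) (by norm_num)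
  calc (⨅ σ : G, (Real.log (‖σ • w‖ ^ 2) - Real.log (‖σ • v‖ ^ 2)))
      = ⨅ σ : G, 2 * Real.log (f σ) := by simp_rw [henergy]
    _ = Real.log (m ^ 2) := key
    _ = Real.log ((Real.tan (⨅ p : G × G, D p)) ^ 2) := by rw [hRHS]
end

section
/- Let V and W be finite-dimensional complex inner product spaces, let G be a nonempty group acting on V and on W by ℂ-linear automorphisms, and let v ∈ V and w ∈ W be nonzero. Define P := {u ∈ V × W : ‖u‖ = 1 and u = c·(σ·v, σ·w) for some σ ∈ G and c ∈ ℂ} and Q := {u ∈ V × W : ‖u‖ = 1 and u = c·(σ·v, 0) for some σ ∈ G and c ∈ ℂ}. Then the energy ν_{v,w}(σ) = log‖σ·w‖² − log‖σ·v‖² is bounded below on G if and only if the (topological) closures of P and Q in V × W are disjoint. -/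
/-- For a group `G` acting ℂ-linearly on finite-dimensional complex inner product
spaces `V`, `W` and nonzero vectors `v ∈ V`, `w ∈ W`, the energy
`ν_{v,w}(σ) = log‖σ·w‖² − log‖σ·v‖²` is bounded below on `G` if and only if the
closures (in the orthogonal direct sum `V × W`) of the sets of unit-norm
representatives of the orbit of the line `[(v,w)]` and of the orbit of the line
`[(v,0)]` are disjoint. -/
theorem energy_bddBelow_iff_closures_disjoint {G V W : Type*} [Group G]
    [NormedAddCommGroup V] [InnerProductSpace ℂ V] [FiniteDimensional ℂ V]
    [NormedAddCommGroup W] [InnerProductSpace ℂ W] [FiniteDimensional ℂ W]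
    [DistribMulAction G V] [SMulCommClass G ℂ V]
    [DistribMulAction G W] [SMulCommClass G ℂ W]
    (v : V) (w : W) (hv : v ≠ 0) (hw : w ≠ 0) :
    (∃ C : ℝ, ∀ σ : G, C ≤ Real.log (‖σ • w‖ ^ 2) - Real.log (‖σ • v‖ ^ 2)) ↔
    closure {u : WithLp 2 (V × W) | ‖u‖ = 1 ∧
        ∃ (σ : G) (c : ℂ), u = c • (WithLp.equiv 2 (V × W)).symm (σ • v, σ • w)} ∩
      closure {u : WithLp 2 (V × W) | ‖u‖ = 1 ∧
        ∃ (σ : G) (c : ℂ), u = c • (WithLp.equiv 2 (V × W)).symm (σ • v, 0)} = ∅ := by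
  classical
  set E := WithLp 2 (V × W) with hE
  have hvne : ∀ σ : G, σ • v ≠ 0 := fun σ => (smul_ne_zero_iff_ne σ).2 hv
  have hwne : ∀ σ : G, σ • w ≠ 0 := fun σ => (smul_ne_zero_iff_ne σ).2 hw
  have hvpos : ∀ σ : G, (0:ℝ) < ‖σ • v‖ := fun σ => norm_pos_iff.2 (hvne σ)
  have hwpos : ∀ σ : G, (0:ℝ) < ‖σ • w‖ := fun σ => norm_pos_iff.2 (hwne σ)
  -- continuity of the projections on E
  have hcfst : Continuous fun u : E => u.fst :=
    continuous_fst.comp (WithLp.prod_continuous_ofLp 2 V W)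
  have hcsnd : Continuous fun u : E => u.snd :=
    continuous_snd.comp (WithLp.prod_continuous_ofLp 2 V W)
  constructor
  · rintro ⟨C, hC⟩
    set ε := Real.exp (C / 2) with hεdef
    have hεpos : 0 < ε := Real.exp_pos _
    have key : ∀ σ : G, ε * ‖σ • v‖ ≤ ‖σ • w‖ := by
      intro σ
      have h1 := hC σ
      rw [Real.log_pow, Real.log_pow] at h1
      have h2 : C / 2 + Real.log ‖σ • v‖ ≤ Real.log ‖σ • w‖ := by push_cast at h1; linarith
      calc ε * ‖σ • v‖ = Real.exp (C / 2 + Real.log ‖σ • v‖) := by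
            rw [Real.exp_add, Real.exp_log (hvpos σ)]
        _ ≤ Real.exp (Real.log ‖σ • w‖) := Real.exp_le_exp.2 h2
        _ = ‖σ • w‖ := Real.exp_log (hwpos σ)
    set f : E → ℝ := fun u => ‖u.snd‖ - ε * ‖u.fst‖ with hfdef
    have hf : Continuous f := (hcsnd.norm).sub (continuous_const.mul hcfst.norm)
    have hP : closure {u : E | ‖u‖ = 1 ∧
        ∃ (σ : G) (c : ℂ), u = c • (WithLp.equiv 2 (V × W)).symm (σ • v, σ • w)} ⊆
        {u : E | 0 ≤ f u} := by
      apply closure_minimal _ (isClosed_le continuous_const hf)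
      rintro u ⟨-, σ, c, rfl⟩
      have h1 : f (c • (WithLp.equiv 2 (V × W)).symm (σ • v, σ • w)) =
          ‖c‖ * ‖σ • w‖ - ε * (‖c‖ * ‖σ • v‖) := by
        simp only [hfdef]
        rw [show (c • (WithLp.equiv 2 (V × W)).symm (σ • v, σ • w) : E).snd = c • (σ • w) from rfl,
          show (c • (WithLp.equiv 2 (V × W)).symm (σ • v, σ • w) : E).fst = c • (σ • v) from rfl,
          norm_smul c (σ • w), norm_smul c (σ • v)]
      rw [Set.mem_setOf_eq, h1]
      have := key σ
      have hc : (0:ℝ) ≤ ‖c‖ := norm_nonneg c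
      nlinarith
    have hQ : closure {u : E | ‖u‖ = 1 ∧
        ∃ (σ : G) (c : ℂ), u = c • (WithLp.equiv 2 (V × W)).symm (σ • v, 0)} ⊆
        {u : E | f u = -ε} := by
      apply closure_minimal _ (isClosed_eq hf continuous_const)
      rintro u ⟨hnorm, σ, c, rfl⟩
      have hcv : ‖c‖ * ‖σ • v‖ = 1 := by
        rw [← norm_smul, ← hnorm]
        congr 1
        have : ‖((WithLp.equiv 2 (V × W)).symm (σ • v, 0) : E)‖ = ‖σ • v‖ :=
          WithLp.norm_toLp_fst 2 V W (σ • v)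
        rw [norm_smul c (σ • v), norm_smul c ((WithLp.equiv 2 (V × W)).symm (σ • v, 0)), this, ← norm_smul]
      have h1 : f (c • (WithLp.equiv 2 (V × W)).symm (σ • v, 0)) =
          ‖c‖ * ‖(0:W)‖ - ε * (‖c‖ * ‖σ • v‖) := by
        simp only [hfdef]
        rw [show (c • (WithLp.equiv 2 (V × W)).symm (σ • v, 0) : E).snd = c • (0:W) from rfl,
          show (c • (WithLp.equiv 2 (V × W)).symm (σ • v, 0) : E).fst = c • (σ • v) from rfl,
          norm_smul, norm_smul]
      rw [Set.mem_setOf_eq, h1, hcv, norm_zero, mul_zero]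
      ring
    rw [Set.eq_empty_iff_forall_notMem]
    rintro u ⟨huP, huQ⟩
    have h1 := hP huP
    have h2 := hQ huQ
    rw [Set.mem_setOf_eq] at h1 h2
    rw [h2] at h1
    linarith
  · intro hdisj
    by_contra hbd
    push_neg at hbd
    -- pick σ n with small energy
    have hex : ∀ n : ℕ, ∃ σ : G,
        Real.log (‖σ • w‖ ^ 2) - Real.log (‖σ • v‖ ^ 2) < 2 * Real.log (1 / ((n:ℝ) + 1)) :=
      fun n => hbd _
    choose σ hσ using hex
    set ε : ℕ → ℝ := fun n => 1 / ((n:ℝ) + 1) with hεdef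
    have hεpos : ∀ n, 0 < ε n := fun n => by positivity
    have key : ∀ n, ‖σ n • w‖ ≤ ε n * ‖σ n • v‖ := by
      intro n
      have h1 := hσ n
      rw [Real.log_pow, Real.log_pow] at h1
      have h2 : Real.log ‖σ n • w‖ < Real.log (ε n * ‖σ n • v‖) := by
        rw [Real.log_mul (ne_of_gt (hεpos n)) (ne_of_gt (hvpos (σ n)))]
        push_cast at h1; linarith
      exact le_of_lt ((Real.log_lt_log_iff (hwpos (σ n))
        (mul_pos (hεpos n) (hvpos (σ n)))).1 h2)
    set a : ℕ → V := fun n => σ n • v with hadef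
    set b : ℕ → W := fun n => σ n • w with hbdef
    set N : ℕ → ℝ := fun n => ‖((WithLp.equiv 2 (V × W)).symm (a n, b n) : E)‖ with hNdef
    have hNpos : ∀ n, 0 < N n := by
      intro n
      rw [hNdef]
      apply norm_pos_iff.2
      intro h
      have : a n = 0 := congrArg Prod.fst (congrArg (WithLp.equiv 2 (V × W)) h)
      exact hvne (σ n) this
    have haN : ∀ n, ‖a n‖ ≤ N n := by
      intro n
      have h1 : (N n) ^ 2 = ‖a n‖ ^ 2 + ‖b n‖ ^ 2 := WithLp.prod_norm_sq_eq_of_L2 _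
      nlinarith [norm_nonneg (a n), norm_nonneg (b n), (hNpos n).le]
    set u : ℕ → E := fun n => (((N n)⁻¹ : ℝ) : ℂ) • (WithLp.equiv 2 (V × W)).symm (a n, b n)
      with hudef
    have hunorm : ∀ n, ‖u n‖ = 1 := by
      intro n
      rw [hudef]
      simp only [norm_smul, Complex.norm_real, Real.norm_eq_abs, abs_inv,
        abs_of_pos (hNpos n)]
      exact inv_mul_cancel₀ (hNpos n).ne'
    have huP : ∀ n, u n ∈ {x : E | ‖x‖ = 1 ∧
        ∃ (σ' : G) (c : ℂ), x = c • (WithLp.equiv 2 (V × W)).symm (σ' • v, σ' • w)} :=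
      fun n => ⟨hunorm n, σ n, (((N n)⁻¹ : ℝ) : ℂ), rfl⟩
    -- compactness of the sphere
    haveI : FiniteDimensional ℂ E := inferInstanceAs (FiniteDimensional ℂ (WithLp 2 (V × W)))
    haveI : ProperSpace E := FiniteDimensional.proper ℂ E
    have hcpt : IsCompact (Metric.sphere (0:E) 1) := isCompact_sphere 0 1
    have humem : ∀ n, u n ∈ Metric.sphere (0:E) 1 := fun n =>
      mem_sphere_zero_iff_norm.2 (hunorm n)
    obtain ⟨x, hxmem, φ, hφ, hφt⟩ := hcpt.tendsto_subseq humem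
    -- snd component of u n tends to 0
    have husnd : ∀ n, ‖(u n).snd‖ ≤ ε n := by
      intro n
      have h1 : (u n).snd = (((N n)⁻¹ : ℝ) : ℂ) • b n := rfl
      rw [h1, norm_smul, Complex.norm_real, Real.norm_eq_abs, abs_inv, abs_of_pos (hNpos n)]
      rw [inv_mul_le_iff₀ (hNpos n)]
      calc ‖b n‖ ≤ ε n * ‖a n‖ := key n
        _ ≤ ε n * N n := mul_le_mul_of_nonneg_left (haN n) (hεpos n).le
        _ = N n * ε n := mul_comm _ _
    have hε0 : Filter.Tendsto ε Filter.atTop (nhds 0) := tendsto_one_div_add_atTop_nhds_zero_nat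
    have hεφ0 : Filter.Tendsto (ε ∘ φ) Filter.atTop (nhds 0) :=
      hε0.comp hφ.tendsto_atTop
    have hsnd0 : Filter.Tendsto (fun n => ‖((u ∘ φ) n).snd‖) Filter.atTop (nhds 0) := by
      apply squeeze_zero (fun n => norm_nonneg _) (fun n => husnd (φ n)) hεφ0
    have hsndx : Filter.Tendsto (fun n => ‖((u ∘ φ) n).snd‖) Filter.atTop (nhds ‖x.snd‖) :=
      (hcsnd.norm.tendsto x).comp hφt
    have hxsnd : x.snd = 0 := by
      have := tendsto_nhds_unique hsndx hsnd0
      exact norm_eq_zero.1 this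
    have hxnorm : ‖x‖ = 1 := mem_sphere_zero_iff_norm.1 hxmem
    have hxfst : ‖x.fst‖ = 1 := by
      have h1 : ‖x‖ ^ 2 = ‖x.fst‖ ^ 2 + ‖x.snd‖ ^ 2 := WithLp.prod_norm_sq_eq_of_L2 x
      rw [hxnorm, hxsnd, norm_zero] at h1
      nlinarith [norm_nonneg x.fst]
    -- the map g
    set g : E → E := fun y => ((‖y.fst‖⁻¹ : ℝ) : ℂ) • (WithLp.equiv 2 (V × W)).symm (y.fst, 0)
      with hgdef
    have hgcont : ContinuousAt g x := by
      show ContinuousAt (fun y : E => ((‖y.fst‖⁻¹ : ℝ) : ℂ) • (WithLp.equiv 2 (V × W)).symm (y.fst, 0)) x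
      apply ContinuousAt.fun_smul
      · exact Complex.continuous_ofReal.continuousAt.comp
          ((hcfst.norm.continuousAt).inv₀ (by rw [hxfst]; norm_num))
      · exact ((WithLp.prod_continuous_toLp 2 V W).comp
          (hcfst.prodMk continuous_const)).continuousAt
    have hapos : ∀ n, 0 < ‖a n‖ := fun n => hvpos (σ n)
    have hane : ∀ n, ‖a n‖ ≠ 0 := fun n => (hapos n).ne'
    set q : ℕ → E := fun n => ((‖a n‖⁻¹ : ℝ) : ℂ) • (WithLp.equiv 2 (V × W)).symm (a n, 0)
      with hqdef
    have hqQ : ∀ n, q n ∈ {x : E | ‖x‖ = 1 ∧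
        ∃ (σ' : G) (c : ℂ), x = c • (WithLp.equiv 2 (V × W)).symm (σ' • v, 0)} := by
      intro n
      refine ⟨?_, σ n, ((‖a n‖⁻¹ : ℝ) : ℂ), rfl⟩
      rw [hqdef]
      simp only [norm_smul, Complex.norm_real, Real.norm_eq_abs, abs_inv,
        abs_of_pos (hapos n)]
      rw [WithLp.equiv_symm_apply, WithLp.norm_toLp_fst]
      exact inv_mul_cancel₀ (hane n)
    have hufst : ∀ n, (u n).fst = (((N n)⁻¹ : ℝ) : ℂ) • a n := fun n => rfl
    have hufstnorm : ∀ n, ‖(u n).fst‖ = (N n)⁻¹ * ‖a n‖ := by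
      intro n
      rw [hufst n, norm_smul, Complex.norm_real, Real.norm_eq_abs, abs_inv,
        abs_of_pos (hNpos n)]
    have hgu : ∀ n, g (u n) = q n := by
      intro n
      show ((‖(u n).fst‖⁻¹ : ℝ) : ℂ) • (WithLp.equiv 2 (V × W)).symm ((u n).fst, 0) = q n
      rw [hufstnorm n, hufst n]
      have h2 : (((((N n)⁻¹ : ℝ) : ℂ) • a n, (0:W)) : V × W)
          = (((N n)⁻¹ : ℝ) : ℂ) • ((a n, 0) : V × W) := by
        rw [Prod.smul_mk, smul_zero]
      rw [h2]
      rw [show ((WithLp.equiv 2 (V × W)).symm ((((N n)⁻¹:ℝ):ℂ) • ((a n, 0) : V × W)) : E)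
          = (((N n)⁻¹:ℝ):ℂ) • (WithLp.equiv 2 (V × W)).symm ((a n, 0) : V × W) from rfl]
      rw [smul_smul, hqdef]
      congr 1
      rw [← Complex.ofReal_mul]
      congr 1
      field_simp
      rw [div_mul_eq_div_div, div_self (hNpos n).ne']
    have hgx : g x = x := by
      have h2 : ((x.fst, (0:W)) : V × W) = WithLp.equiv 2 (V × W) x := by
        rw [← hxsnd]
        rfl
      show ((‖x.fst‖⁻¹ : ℝ) : ℂ) • (WithLp.equiv 2 (V × W)).symm ((x.fst, 0) : V × W) = x
      rw [hxfst, h2, Equiv.symm_apply_apply]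
      norm_num
    have hqt : Filter.Tendsto (q ∘ φ) Filter.atTop (nhds x) := by
      have h3 : Filter.Tendsto (g ∘ (u ∘ φ)) Filter.atTop (nhds (g x)) :=
        hgcont.tendsto.comp hφt
      rw [hgx] at h3
      have h4 : q ∘ φ = g ∘ (u ∘ φ) := by
        funext n; exact (hgu (φ n)).symm
      rw [h4]; exact h3
    have hxP : x ∈ closure {x : E | ‖x‖ = 1 ∧
        ∃ (σ' : G) (c : ℂ), x = c • (WithLp.equiv 2 (V × W)).symm (σ' • v, σ' • w)} :=
      mem_closure_of_tendsto hφt (Filter.Eventually.of_forall fun n => huP (φ n))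
    have hxQ : x ∈ closure {x : E | ‖x‖ = 1 ∧
        ∃ (σ' : G) (c : ℂ), x = c • (WithLp.equiv 2 (V × W)).symm (σ' • v, 0)} :=
      mem_closure_of_tendsto hqt (Filter.Eventually.of_forall fun n => hqQ (φ n))
    exact absurd (Set.mem_inter hxP hxQ) (by rw [hdisj]; exact Set.notMem_empty x)
end

section
/- Let W be a finite-dimensional complex inner product space, let G be a nonempty group acting on W by ℂ-linear automorphisms, and let w ∈ W be nonzero. Give ℂ the trivial G-action and equip ℂ × W with the orthogonal direct-sum inner product. Define P := {u ∈ ℂ × W : ‖u‖ = 1 and u = c·(1, σ·w) for some σ ∈ G and c ∈ ℂ} and Q := {u ∈ ℂ × W : ‖u‖ = 1 and u = (c, 0) for some c ∈ ℂ}. Then the closures of P and Q in ℂ × W are disjoint if and only if 0 is not in the closure of the orbit {σ·w : σ ∈ G} in W. -/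
open Filter Topology

private lemma norm_symm_pair {W : Type*} [NormedAddCommGroup W] [InnerProductSpace ℂ W]
    (a : ℂ) (b : W) :
    ‖(WithLp.equiv 2 (ℂ × W)).symm (a, b)‖ = Real.sqrt (‖a‖ ^ 2 + ‖b‖ ^ 2) := by
  rw [WithLp.prod_norm_eq_of_L2]
  rfl


/-- For a group `G` acting ℂ-linearly on a finite-dimensional complex inner product
space `W` and a nonzero `w ∈ W`, with ℂ carrying the trivial `G`-action and `ℂ × W`
the orthogonal direct-sum inner product: the closures of the unit-norm representative
sets of the orbit of the line `[(1,w)]` and of the lines in `ℂ × {0}` are disjoint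
if and only if `0` is not in the closure of the orbit `G·w` in `W`
(Hilbert–Mumford semistability of `w`). -/
theorem pair_semistable_iff_hilbert_mumford {G W : Type*} [Group G]
    [NormedAddCommGroup W] [InnerProductSpace ℂ W] [FiniteDimensional ℂ W]
    [DistribMulAction G W] [SMulCommClass G ℂ W]
    (w : W) (hw : w ≠ 0) :
    (closure {u : WithLp 2 (ℂ × W) | ‖u‖ = 1 ∧
        ∃ (σ : G) (c : ℂ), u = c • (WithLp.equiv 2 (ℂ × W)).symm (1, σ • w)} ∩
      closure {u : WithLp 2 (ℂ × W) | ‖u‖ = 1 ∧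
        ∃ c : ℂ, u = (WithLp.equiv 2 (ℂ × W)).symm (c, 0)} = ∅) ↔
    (0 : W) ∉ closure {x : W | ∃ σ : G, x = σ • w} := by
  set e := (WithLp.equiv 2 (ℂ × W)).symm with he
  constructor
  · -- closures disjoint → 0 ∉ closure orbit
    intro h hc
    rw [mem_closure_iff_seq_limit] at hc
    obtain ⟨x, hxS, hx⟩ := hc
    choose σ hσ using hxS
    set c : ℕ → ℝ := fun n => (Real.sqrt (1 + ‖x n‖ ^ 2))⁻¹ with hcdef
    have hsq : ∀ n, (0:ℝ) < Real.sqrt (1 + ‖x n‖ ^ 2) := fun n =>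
      Real.sqrt_pos.2 (by positivity)
    set u : ℕ → WithLp 2 (ℂ × W) := fun n => ((c n : ℂ)) • e (1, x n) with hu
    have hn : ∀ n, ‖u n‖ = 1 := by
      intro n
      show ‖((c n : ℂ)) • e (1, x n)‖ = 1
      rw [norm_smul, he, norm_symm_pair, norm_one, one_pow, Complex.norm_real,
        Real.norm_eq_abs, abs_of_pos (by positivity)]
      exact inv_mul_cancel₀ (hsq n).ne'
    have hmemP : ∀ n, u n ∈ {u : WithLp 2 (ℂ × W) | ‖u‖ = 1 ∧
        ∃ (σ : G) (c : ℂ), u = c • e (1, σ • w)} := by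
      intro n
      refine ⟨hn n, σ n, (c n : ℂ), ?_⟩
      rw [← hσ n]
    have hclim : Tendsto c atTop (𝓝 1) := by
      have h1 : Tendsto (fun n => ‖x n‖) atTop (𝓝 0) := by
        simpa [Function.comp_def] using (continuous_norm.tendsto (0 : W)).comp hx
      have h2 : ContinuousAt (fun t : ℝ => (Real.sqrt (1 + t ^ 2))⁻¹) 0 := by
        apply ContinuousAt.inv₀
        · exact (Real.continuous_sqrt.comp (by continuity)).continuousAt
        · simp
      have := h2.tendsto.comp h1
      simpa [Function.comp_def] using this
    have hulim : Tendsto u atTop (𝓝 (e (1, 0))) := by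
      have hcont : Continuous e := WithLp.prod_continuous_toLp 2 ℂ W
      have hpair : Tendsto (fun n => ((1 : ℂ), x n)) atTop (𝓝 ((1 : ℂ), (0 : W))) :=
        tendsto_const_nhds.prodMk_nhds hx
      have hcc : Tendsto (fun n => (c n : ℂ)) atTop (𝓝 1) := by
        have := (Complex.continuous_ofReal.tendsto 1).comp hclim
        simpa [Function.comp_def] using this
      have hs : Tendsto (fun n => (c n : ℂ) • ((1 : ℂ), x n)) atTop
          (𝓝 ((1 : ℂ) • ((1 : ℂ), (0 : W)))) := hcc.smul hpair
      have h3 := (hcont.tendsto _).comp hs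
      simp only [one_smul] at h3
      exact h3.congr (fun n => rfl)
    have hP : e (1, 0) ∈ closure {u : WithLp 2 (ℂ × W) | ‖u‖ = 1 ∧
        ∃ (σ : G) (c : ℂ), u = c • e (1, σ • w)} :=
      mem_closure_of_tendsto hulim (Eventually.of_forall hmemP)
    have hQ : e (1, 0) ∈ closure {u : WithLp 2 (ℂ × W) | ‖u‖ = 1 ∧
        ∃ c : ℂ, u = e (c, 0)} := by
      apply subset_closure
      refine ⟨?_, 1, rfl⟩
      rw [he, norm_symm_pair]
      simp
    exact absurd (Set.eq_empty_iff_forall_notMem.1 h _ ⟨hP, hQ⟩) (by simp)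
  · -- 0 ∉ closure orbit → closures disjoint
    intro h
    rw [Metric.mem_closure_iff] at h
    push_neg at h
    obtain ⟨ε, hε, hsep⟩ := h
    have hsep' : ∀ σ : G, ε ≤ ‖σ • w‖ := by
      intro σ
      have := hsep (σ • w) ⟨σ, rfl⟩
      rwa [dist_zero_left] at this
    set δ : ℝ := (Real.sqrt (1 + ε ^ 2))⁻¹ with hδ
    have hsq1 : (1:ℝ) < Real.sqrt (1 + ε ^ 2) := by
      rw [show (1:ℝ) < Real.sqrt (1 + ε ^ 2) ↔ 1 ^ 2 < 1 + ε ^ 2 from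
        Real.lt_sqrt (by norm_num)]
      nlinarith
    have hδ1 : δ < 1 := by
      rw [hδ]
      exact inv_lt_one_of_one_lt₀ hsq1
    rw [Set.eq_empty_iff_forall_notMem]
    rintro v ⟨hvP, hvQ⟩
    have hQclosed : IsClosed {u : WithLp 2 (ℂ × W) | ‖u‖ = 1 ∧
        ∃ c : ℂ, u = e (c, 0)} := by
      have heqset : {u : WithLp 2 (ℂ × W) | ‖u‖ = 1 ∧ ∃ c : ℂ, u = e (c, 0)} =
          {u : WithLp 2 (ℂ × W) | ‖u‖ = 1} ∩
          {u : WithLp 2 (ℂ × W) | (WithLp.equiv 2 (ℂ × W) u).2 = 0} := by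
        ext u
        simp only [Set.mem_setOf_eq, Set.mem_inter_iff]
        constructor
        · rintro ⟨h1, c, rfl⟩
          exact ⟨h1, by simp [he]⟩
        · rintro ⟨h1, h2⟩
          refine ⟨h1, (WithLp.equiv 2 (ℂ × W) u).1, ?_⟩
          rw [he]
          conv_lhs => rw [← (WithLp.equiv 2 (ℂ × W)).symm_apply_apply u]
          congr 1
          exact Prod.ext_iff.mpr ⟨rfl, h2⟩
      rw [heqset]
      exact (isClosed_eq continuous_norm continuous_const).inter
        (isClosed_eq (continuous_snd.comp (WithLp.prod_continuous_ofLp 2 ℂ W))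
          continuous_const)
    rw [hQclosed.closure_eq] at hvQ
    obtain ⟨hv1, cQ, hcQ⟩ := hvQ
    have hcQ1 : ‖cQ‖ = 1 := by
      rw [hcQ, he, norm_symm_pair] at hv1
      have h2 : ‖cQ‖ ^ 2 = 1 := by
        have := hv1
        rw [norm_zero] at this
        nlinarith [Real.sq_sqrt (by positivity : (0:ℝ) ≤ ‖cQ‖ ^ 2 + 0 ^ 2),
          Real.sqrt_nonneg (‖cQ‖ ^ 2 + 0 ^ 2)]
      nlinarith [norm_nonneg cQ]
    have hPsub : closure {u : WithLp 2 (ℂ × W) | ‖u‖ = 1 ∧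
        ∃ (σ : G) (c : ℂ), u = c • e (1, σ • w)} ⊆
        {u : WithLp 2 (ℂ × W) | ‖(WithLp.equiv 2 (ℂ × W) u).1‖ ≤ δ} := by
      apply closure_minimal
      · rintro u ⟨hu1, σc, cc, rfl⟩
        simp only [Set.mem_setOf_eq]
        rw [he, norm_smul, norm_symm_pair, norm_one, one_pow] at hu1
        have hpos : (0:ℝ) < Real.sqrt (1 + ‖σc • w‖ ^ 2) := Real.sqrt_pos.2 (by positivity)
        have hcc : ‖cc‖ = (Real.sqrt (1 + ‖σc • w‖ ^ 2))⁻¹ :=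
          eq_inv_of_mul_eq_one_left hu1
        have hmono : Real.sqrt (1 + ε ^ 2) ≤ Real.sqrt (1 + ‖σc • w‖ ^ 2) :=
          Real.sqrt_le_sqrt (by nlinarith [hsep' σc, norm_nonneg (σc • w)])
        have hfst : ‖(WithLp.equiv 2 (ℂ × W)
            (cc • e (1, σc • w))).1‖ = ‖cc‖ := by
          rw [he]
          simp [smul_eq_mul]
        rw [hfst, hcc, hδ]
        exact inv_anti₀ (by positivity) hmono
      · exact isClosed_le ((continuous_fst.comp
          (WithLp.prod_continuous_ofLp 2 ℂ W)).norm) continuous_const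
    have hle := hPsub hvP
    simp only [Set.mem_setOf_eq] at hle
    rw [hcQ, he] at hle
    simp only [Equiv.apply_symm_apply] at hle
    rw [hcQ1] at hle
    linarith
end

section
/- Let V and W be complex normed vector spaces. Let S and T be nonempty finite sets of integers, let (v_k)_{k∈S} be vectors of V with v_k ≠ 0 for all k ∈ S, and let (w_k)_{k∈T} be vectors of W with w_k ≠ 0 for all k ∈ T. Set F := (min T) − (min S). Then there exist δ > 0 and C ≥ 0 such that for all t ∈ ℂ with 0 < |t| < δ one has | (log‖Σ_{k∈T} t^k w_k‖² − log‖Σ_{k∈S} t^k v_k‖²) − F·log|t|² | ≤ C. In other words, along the degeneration λ(t) the energy satisfies ν(λ(t)) = F_gen(λ)·log|t|² + O(1) as |t| → 0. -/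
lemma single_asymptotic {V : Type*} [NormedAddCommGroup V] [NormedSpace ℂ V]
    (S : Finset ℤ) (hS : S.Nonempty) (v : ℤ → V) (hv : ∀ k ∈ S, v k ≠ 0) :
    ∃ δ > (0 : ℝ), ∃ C : ℝ, 0 ≤ C ∧ ∀ t : ℂ, 0 < ‖t‖ → ‖t‖ < δ →
      |Real.log (‖∑ k ∈ S, t ^ k • v k‖ ^ 2) -
        (S.min' hS : ℝ) * Real.log (‖t‖ ^ 2)| ≤ C := by
  set m := S.min' hS with hm
  set g : ℂ → V := fun t => ∑ k ∈ S, t ^ ((k - m).toNat) • v k with hg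
  have hg0 : g 0 = v m := by
    show ∑ k ∈ S, (0:ℂ) ^ (k - m).toNat • v k = v m
    rw [Finset.sum_eq_single_of_mem m (S.min'_mem hS)]
    · simp
    · intro k hk hne
      have hkm : m < k := lt_of_le_of_ne (S.min'_le k hk) (Ne.symm hne)
      have : (k - m).toNat ≠ 0 := by omega
      simp [zero_pow this]
  have ha : 0 < ‖v m‖ := norm_pos_iff.mpr (hv m (S.min'_mem hS))
  set a := ‖v m‖ with haa
  have hgc : ContinuousAt g 0 := by
    apply Continuous.continuousAt
    apply continuous_finset_sum
    intro k hk
    exact (continuous_pow _).smul continuous_const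
  rw [Metric.continuousAt_iff] at hgc
  obtain ⟨δ, hδ, hδ'⟩ := hgc (a / 2) (by positivity)
  set C : ℝ := 2 * (|Real.log (a / 2)| + |Real.log (3 * a / 2)|) with hC
  refine ⟨δ, hδ, C, by positivity, ?_⟩
  intro t ht htδ
  have ht0 : t ≠ 0 := by simpa using ht.ne'
  have hgt : ‖g t - v m‖ < a / 2 := by
    have := hδ' (x := t) (by simpa [dist_eq_norm] using htδ)
    simpa [dist_eq_norm, hg0] using this
  have hlow : a / 2 ≤ ‖g t‖ := by
    have h1 : ‖v m‖ - ‖g t‖ ≤ ‖g t - v m‖ := by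
      have := norm_sub_norm_le (v m) (g t)
      simpa [norm_sub_rev] using this
    linarith
  have hup : ‖g t‖ ≤ 3 * a / 2 := by
    have h1 : ‖g t‖ - ‖v m‖ ≤ ‖g t - v m‖ := norm_sub_norm_le _ _
    linarith
  have hgpos : 0 < ‖g t‖ := lt_of_lt_of_le (by positivity) hlow
  -- key identity
  have key : ∑ k ∈ S, t ^ k • v k = t ^ m • g t := by
    rw [hg, Finset.smul_sum]
    apply Finset.sum_congr rfl
    intro k hk
    rw [smul_smul]
    congr 1
    have hmk : m ≤ k := S.min'_le k hk
    have : ((k - m).toNat : ℤ) = k - m := Int.toNat_of_nonneg (by omega)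
    rw [← zpow_natCast t ((k - m).toNat), this, ← zpow_add₀ ht0]
    ring_nf
  have hnorm : ‖∑ k ∈ S, t ^ k • v k‖ = ‖t‖ ^ m * ‖g t‖ := by
    rw [key, norm_smul, norm_zpow]
  have htpos : (0:ℝ) < ‖t‖ ^ m := zpow_pos ht m
  have hlogeq : Real.log (‖∑ k ∈ S, t ^ k • v k‖ ^ 2)
      = (m : ℝ) * Real.log (‖t‖ ^ 2) + Real.log (‖g t‖ ^ 2) := by
    rw [hnorm, mul_pow, Real.log_mul (by positivity) (by positivity)]
    congr 1
    rw [← zpow_natCast (‖t‖ ^ m) 2, ← zpow_mul, mul_comm (m : ℤ), zpow_mul,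
      zpow_natCast, Real.log_zpow]
  rw [hlogeq]
  have habs : |Real.log (‖g t‖ ^ 2)| ≤ C := by
    have hsq : Real.log (‖g t‖ ^ 2) = 2 * Real.log ‖g t‖ := by
      rw [Real.log_pow]; norm_num
    rw [hsq]
    have hL : Real.log (a / 2) ≤ Real.log ‖g t‖ := Real.log_le_log (by positivity) hlow
    have hU : Real.log ‖g t‖ ≤ Real.log (3 * a / 2) := Real.log_le_log hgpos hup
    rw [hC, abs_mul]
    have : |Real.log ‖g t‖| ≤ |Real.log (a / 2)| + |Real.log (3 * a / 2)| := by
      rw [abs_le]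
      constructor
      · have := neg_abs_le (Real.log (a / 2))
        have := abs_nonneg (Real.log (3 * a / 2))
        linarith
      · have := le_abs_self (Real.log (3 * a / 2))
        have := abs_nonneg (Real.log (a / 2))
        linarith
    calc |(2:ℝ)| * |Real.log ‖g t‖| = 2 * |Real.log ‖g t‖| := by norm_num
      _ ≤ 2 * (|Real.log (a / 2)| + |Real.log (3 * a / 2)|) := by linarith
  calc |(m : ℝ) * Real.log (‖t‖ ^ 2) + Real.log (‖g t‖ ^ 2) - (m : ℝ) * Real.log (‖t‖ ^ 2)|
      = |Real.log (‖g t‖ ^ 2)| := by ring_nf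
    _ ≤ C := habs

/-- Along a degeneration `λ(t)` acting with weights `S` on `v` and `T` on `w`,
the energy of the pair satisfies
`ν(λ(t)) = F_gen(λ)·log|t|² + O(1)` as `|t| → 0`, where
`F_gen(λ) = min T − min S` is the generalized Futaki invariant. -/
theorem energy_asymptotic_futaki {V W : Type*} [NormedAddCommGroup V] [NormedSpace ℂ V]
    [NormedAddCommGroup W] [NormedSpace ℂ W]
    (S T : Finset ℤ) (hS : S.Nonempty) (hT : T.Nonempty)
    (v : ℤ → V) (hv : ∀ k ∈ S, v k ≠ 0)
    (w : ℤ → W) (hw : ∀ k ∈ T, w k ≠ 0) :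
    ∃ δ > (0 : ℝ), ∃ C : ℝ, 0 ≤ C ∧ ∀ t : ℂ, 0 < ‖t‖ → ‖t‖ < δ →
      |(Real.log (‖∑ k ∈ T, t ^ k • w k‖ ^ 2) -
          Real.log (‖∑ k ∈ S, t ^ k • v k‖ ^ 2)) -
        ((T.min' hT - S.min' hS : ℤ) : ℝ) * Real.log (‖t‖ ^ 2)| ≤ C := by
  obtain ⟨δ₁, hδ₁, C₁, hC₁, h₁⟩ := single_asymptotic S hS v hv
  obtain ⟨δ₂, hδ₂, C₂, hC₂, h₂⟩ := single_asymptotic T hT w hw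
  refine ⟨min δ₁ δ₂, lt_min hδ₁ hδ₂, C₁ + C₂, by linarith, ?_⟩
  intro t ht htδ
  have e₁ := h₁ t ht (lt_of_lt_of_le htδ (min_le_left _ _))
  have e₂ := h₂ t ht (lt_of_lt_of_le htδ (min_le_right _ _))
  have : (Real.log (‖∑ k ∈ T, t ^ k • w k‖ ^ 2) -
          Real.log (‖∑ k ∈ S, t ^ k • v k‖ ^ 2)) -
        ((T.min' hT - S.min' hS : ℤ) : ℝ) * Real.log (‖t‖ ^ 2)
      = (Real.log (‖∑ k ∈ T, t ^ k • w k‖ ^ 2) - (T.min' hT : ℝ) * Real.log (‖t‖ ^ 2))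
        - (Real.log (‖∑ k ∈ S, t ^ k • v k‖ ^ 2) - (S.min' hS : ℝ) * Real.log (‖t‖ ^ 2)) := by
    push_cast
    ring
  rw [this]
  calc _ ≤ |Real.log (‖∑ k ∈ T, t ^ k • w k‖ ^ 2) - (T.min' hT : ℝ) * Real.log (‖t‖ ^ 2)|
        + |Real.log (‖∑ k ∈ S, t ^ k • v k‖ ^ 2) - (S.min' hS : ℝ) * Real.log (‖t‖ ^ 2)| :=
      abs_sub _ _
    _ ≤ C₁ + C₂ := by linarith
end

section
/- Let A and B be nonempty finite subsets of ℤⁿ, and let v : A → ℂ and w : B → ℂ satisfy v(a) ≠ 0 for every a ∈ A and w(b) ≠ 0 for every b ∈ B. For t ∈ (ℂ∖{0})ⁿ define ν(t) := log(Σ_{b∈B} |t^b · w(b)|²) − log(Σ_{a∈A} |t^a · v(a)|²). Then ν is bounded below on (ℂ∖{0})ⁿ if and only if the convex hull of A in ℝⁿ is contained in the convex hull of B. -/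
open Finset

noncomputable def eS {n : ℕ} (A : Finset (Fin n → ℤ)) (v : (Fin n → ℤ) → ℂ)
    (x : Fin n → ℝ) : ℝ :=
  ∑ a ∈ A, Real.exp (2 * ∑ i, (a i : ℝ) * x i) * ‖v a‖ ^ 2

lemma eS_pos {n : ℕ} {A : Finset (Fin n → ℤ)} {v : (Fin n → ℤ) → ℂ}
    (hA : A.Nonempty) (hv : ∀ a ∈ A, v a ≠ 0) (x : Fin n → ℝ) :
    0 < eS A v x := by
  refine Finset.sum_pos (fun a ha => ?_) hA
  exact mul_pos (Real.exp_pos _) (pow_pos (norm_pos_iff.mpr (hv a ha)) 2)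

lemma sum_norm_eq {n : ℕ} (A : Finset (Fin n → ℤ)) (v : (Fin n → ℤ) → ℂ)
    (t : Fin n → ℂ) (ht : ∀ i, t i ≠ 0) :
    ∑ a ∈ A, ‖(∏ i, t i ^ a i) * v a‖ ^ 2 = eS A v (fun i => Real.log ‖t i‖) := by
  refine Finset.sum_congr rfl fun a _ => ?_
  have h1 : ‖∏ i, t i ^ a i‖ = Real.exp (∑ i, (a i : ℝ) * Real.log ‖t i‖) := by
    rw [norm_prod, Real.exp_sum]
    refine Finset.prod_congr rfl fun i _ => ?_
    rw [norm_zpow]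
    have hpos : (0:ℝ) < ‖t i‖ := norm_pos_iff.mpr (ht i)
    rw [← Real.exp_log (zpow_pos hpos (a i)), Real.log_zpow]
  rw [norm_mul, mul_pow, h1, sq (Real.exp _), ← Real.exp_add, ← two_mul]

/-- The torus energy `ν(t) = log Σ_{b∈B} |t^b w(b)|² − log Σ_{a∈A} |t^a v(a)|²`
is bounded below on `(ℂ∖{0})ⁿ` iff the weight polytope of `v` (the convex hull
of `A`) is contained in the weight polytope of `w` (the convex hull of `B`). -/
theorem torus_energy_bddBelow_iff_convexHull_subset {n : ℕ}
    (A B : Finset (Fin n → ℤ)) (hA : A.Nonempty) (hB : B.Nonempty)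
    (v w : (Fin n → ℤ) → ℂ) (hv : ∀ a ∈ A, v a ≠ 0) (hw : ∀ b ∈ B, w b ≠ 0) :
    (∃ C : ℝ, ∀ t : Fin n → ℂ, (∀ i, t i ≠ 0) →
      C ≤ Real.log (∑ b ∈ B, ‖(∏ i, t i ^ b i) * w b‖ ^ 2) -
          Real.log (∑ a ∈ A, ‖(∏ i, t i ^ a i) * v a‖ ^ 2)) ↔
    convexHull ℝ ((fun a : Fin n → ℤ => fun i => (a i : ℝ)) '' ↑A) ⊆
      convexHull ℝ ((fun a : Fin n → ℤ => fun i => (a i : ℝ)) '' ↑B) := by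
  set ι : (Fin n → ℤ) → (Fin n → ℝ) := fun a => fun i => (a i : ℝ) with hι
  -- reduce to the real statement
  have hred : (∃ C : ℝ, ∀ t : Fin n → ℂ, (∀ i, t i ≠ 0) →
      C ≤ Real.log (∑ b ∈ B, ‖(∏ i, t i ^ b i) * w b‖ ^ 2) -
          Real.log (∑ a ∈ A, ‖(∏ i, t i ^ a i) * v a‖ ^ 2)) ↔
      (∃ C : ℝ, ∀ x : Fin n → ℝ, C ≤ Real.log (eS B w x) - Real.log (eS A v x)) := by
    constructor
    · rintro ⟨C, hC⟩
      refine ⟨C, fun x => ?_⟩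
      have ht : ∀ i, ((Real.exp (x i) : ℂ)) ≠ 0 := fun i => by
        simp [Complex.ofReal_ne_zero, (Real.exp_pos (x i)).ne']
      have := hC (fun i => (Real.exp (x i) : ℂ)) ht
      rwa [sum_norm_eq A v _ ht, sum_norm_eq B w _ ht,
        (by funext i; simp [Complex.norm_real, Real.norm_eq_abs,
            abs_of_pos (Real.exp_pos _), Real.log_exp] :
          (fun i => Real.log ‖((Real.exp (x i) : ℂ))‖) = x)] at this
    · rintro ⟨C, hC⟩
      refine ⟨C, fun t ht => ?_⟩
      rw [sum_norm_eq A v t ht, sum_norm_eq B w t ht]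
      exact hC _
  rw [hred]
  constructor
  · -- bounded → convex hull containment
    rintro ⟨C, hC⟩
    by_contra hsub
    obtain ⟨p, hpA, hpB⟩ : ∃ p ∈ ι '' ↑A, p ∉ convexHull ℝ (ι '' ↑B) := by
      by_contra h'
      push_neg at h'
      exact hsub (convexHull_min h' (convex_convexHull ℝ _))
    obtain ⟨a, haA, rfl⟩ := hpA
    have haA' : a ∈ A := haA
    have hclosed : IsClosed (convexHull ℝ (ι '' (↑B : Set (Fin n → ℤ)))) :=
      ((B.finite_toSet.image ι).isCompact_convexHull ℝ).isClosed
    obtain ⟨f, u, hfu, hup⟩ :=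
      geometric_hahn_banach_closed_point (convex_convexHull ℝ _) hclosed hpB
    set y : Fin n → ℝ := fun i => f (Pi.single i 1) with hy
    have hf : ∀ z : Fin n → ℝ, f z = ∑ i, z i * y i := by
      intro z
      have hz : z = ∑ i, z i • (Pi.single i (1:ℝ) : Fin n → ℝ) := by
        funext j
        rw [Finset.sum_apply]
        simp [Pi.single_apply]
      conv_lhs => rw [hz]
      rw [map_sum]
      exact Finset.sum_congr rfl fun i _ => by rw [map_smul, smul_eq_mul]
    set fa : ℝ := f (ι a) with hfa
    have hδ : 0 < fa - u := by simpa [hfa] using sub_pos.mpr hup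
    set W : ℝ := ∑ b ∈ B, ‖w b‖ ^ 2 with hW
    have hWpos : 0 < W :=
      Finset.sum_pos (fun b hb => pow_pos (norm_pos_iff.mpr (hw b hb)) 2) hB
    have hva : (0:ℝ) < ‖v a‖ ^ 2 := pow_pos (norm_pos_iff.mpr (hv a haA')) 2
    set K : ℝ := Real.log W - Real.log (‖v a‖ ^ 2) with hK
    set s : ℝ := max 0 ((K - C) / (2 * (fa - u)) + 1) with hs
    have hs0 : 0 ≤ s := le_max_left _ _
    set x : Fin n → ℝ := fun i => s * y i with hx
    have hip : ∀ p : Fin n → ℤ, ∑ i, (p i : ℝ) * x i = s * f (ι p) := by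
      intro p
      rw [hf (ι p), Finset.mul_sum]
      exact Finset.sum_congr rfl fun i _ => by simp [hx, hι]; ring
    -- upper bound on numerator
    have hnum : eS B w x ≤ Real.exp (2 * (s * u)) * W := by
      rw [eS, hW, Finset.mul_sum]
      refine Finset.sum_le_sum fun b hb => ?_
      have hb' : f (ι b) ≤ u :=
        le_of_lt (hfu (ι b) (subset_convexHull ℝ _ ⟨b, hb, rfl⟩))
      have : (2:ℝ) * ∑ i, (b i : ℝ) * x i ≤ 2 * (s * u) := by
        rw [hip b]
        have := mul_le_mul_of_nonneg_left hb' hs0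
        linarith
      exact mul_le_mul_of_nonneg_right (Real.exp_le_exp.mpr this) (by positivity)
    have hlog1 : Real.log (eS B w x) ≤ 2 * (s * u) + Real.log W := by
      calc Real.log (eS B w x) ≤ Real.log (Real.exp (2 * (s * u)) * W) :=
            Real.log_le_log (eS_pos hB hw x) hnum
        _ = 2 * (s * u) + Real.log W := by
            rw [Real.log_mul (Real.exp_ne_zero _) hWpos.ne', Real.log_exp]
    -- lower bound on denominator
    have hden : Real.exp (2 * (s * fa)) * ‖v a‖ ^ 2 ≤ eS A v x := by
      rw [eS]
      have := Finset.single_le_sum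
        (f := fun a => Real.exp (2 * ∑ i, (a i : ℝ) * x i) * ‖v a‖ ^ 2)
        (fun a _ => by positivity) haA'
      simpa [hip a, hfa] using this
    have hlog2 : 2 * (s * fa) + Real.log (‖v a‖ ^ 2) ≤ Real.log (eS A v x) := by
      calc 2 * (s * fa) + Real.log (‖v a‖ ^ 2)
          = Real.log (Real.exp (2 * (s * fa)) * ‖v a‖ ^ 2) := by
            rw [Real.log_mul (Real.exp_ne_zero _) hva.ne', Real.log_exp]
        _ ≤ Real.log (eS A v x) :=
            Real.log_le_log (by positivity) hden
    have hCx := hC x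
    have hineq : C ≤ K - 2 * s * (fa - u) := by
      have : Real.log (eS B w x) - Real.log (eS A v x)
          ≤ K - 2 * s * (fa - u) := by
        rw [hK]; linarith
      linarith
    have hsbig : (K - C) / (2 * (fa - u)) + 1 ≤ s := le_max_right _ _
    have h2δ : (0:ℝ) < 2 * (fa - u) := by linarith
    have hlt : K - C < s * (2 * (fa - u)) := by
      have h1 : (K - C) / (2 * (fa - u)) < s := by linarith
      exact (div_lt_iff₀ h2δ).mp h1
    linarith
  · -- convex hull containment → bounded
    intro hsub
    set m : ℝ := B.inf' hB (fun b => ‖w b‖ ^ 2) with hm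
    have hmpos : 0 < m :=
      (Finset.lt_inf'_iff hB).mpr fun b hb => pow_pos (norm_pos_iff.mpr (hw b hb)) 2
    set V : ℝ := ∑ a ∈ A, ‖v a‖ ^ 2 with hV
    have hVpos : 0 < V :=
      Finset.sum_pos (fun a ha => pow_pos (norm_pos_iff.mpr (hv a ha)) 2) hA
    refine ⟨Real.log m - Real.log V, fun x => ?_⟩
    have hconv : ConvexOn ℝ Set.univ (fun z : Fin n → ℝ =>
        Real.exp (2 * ∑ i, z i * x i)) := by
      refine ⟨convex_univ, fun p _ q _ α β hα hβ hαβ => ?_⟩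
      have hlin : 2 * ∑ i, (α • p + β • q) i * x i
          = α * (2 * ∑ i, p i * x i) + β * (2 * ∑ i, q i * x i) := by
        simp only [Pi.add_apply, Pi.smul_apply, smul_eq_mul, Finset.mul_sum,
          ← Finset.sum_add_distrib]
        exact Finset.sum_congr rfl fun i _ => by ring
      simp only [smul_eq_mul, hlin]
      exact convexOn_exp.2 (Set.mem_univ _) (Set.mem_univ _) hα hβ hαβ
    have hkey : eS A v x * m ≤ eS B w x * V := by
      have h1 : ∀ a ∈ A, Real.exp (2 * ∑ i, (a i : ℝ) * x i) * m ≤ eS B w x := by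
        intro a ha
        have hmem : ι a ∈ convexHull ℝ (ι '' (↑B : Set (Fin n → ℤ))) :=
          hsub (subset_convexHull ℝ _ ⟨a, ha, rfl⟩)
        obtain ⟨q, hqB, hle⟩ :=
          hconv.exists_ge_of_mem_convexHull (Set.subset_univ _) hmem
        obtain ⟨b, hbB, rfl⟩ := hqB
        have h2 : Real.exp (2 * ∑ i, (b i : ℝ) * x i) * ‖w b‖ ^ 2 ≤ eS B w x :=
          Finset.single_le_sum
            (f := fun b => Real.exp (2 * ∑ i, (b i : ℝ) * x i) * ‖w b‖ ^ 2)
            (fun b _ => by positivity) hbB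
        have h3 : m ≤ ‖w b‖ ^ 2 := Finset.inf'_le _ hbB
        calc Real.exp (2 * ∑ i, (a i : ℝ) * x i) * m
            ≤ Real.exp (2 * ∑ i, (b i : ℝ) * x i) * ‖w b‖ ^ 2 :=
              mul_le_mul hle h3 hmpos.le (Real.exp_pos _).le
          _ ≤ eS B w x := h2
      calc eS A v x * m = ∑ a ∈ A, (Real.exp (2 * ∑ i, (a i : ℝ) * x i) * m) * ‖v a‖ ^ 2 := by
            rw [eS, Finset.sum_mul]
            exact Finset.sum_congr rfl fun a _ => by ring
        _ ≤ ∑ a ∈ A, eS B w x * ‖v a‖ ^ 2 :=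
            Finset.sum_le_sum fun a ha =>
              mul_le_mul_of_nonneg_right (h1 a ha) (by positivity)
        _ = eS B w x * V := by rw [hV, Finset.mul_sum]
    have hAle : eS A v x ≤ eS B w x * V / m := by
      rw [le_div_iff₀ hmpos]
      exact hkey
    have hSB := eS_pos hB hw x
    have hlog : Real.log (eS A v x) ≤ Real.log (eS B w x) + Real.log V - Real.log m := by
      calc Real.log (eS A v x) ≤ Real.log (eS B w x * V / m) :=
            Real.log_le_log (eS_pos hA hv x) hAle
        _ = Real.log (eS B w x) + Real.log V - Real.log m := by
            rw [Real.log_div (by positivity) hmpos.ne', Real.log_mul hSB.ne' hVpos.ne']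
    linarith
end

section
/- Let A and B be nonempty finite subsets of ℤⁿ, and let v : A → ℂ and w : B → ℂ satisfy v(a) ≠ 0 for every a ∈ A and w(b) ≠ 0 for every b ∈ B. For t ∈ (ℂ∖{0})ⁿ define ν(t) := log(Σ_{b∈B} |t^b · w(b)|²) − log(Σ_{a∈A} |t^a · v(a)|²), and for u ∈ ℤⁿ let λ^u(t) := (t^{u_1},…,t^{u_n}) for t ∈ ℂ∖{0}. Then the following are equivalent: (i) for every u ∈ ℤⁿ the function t ↦ ν(λ^u(t)) is bounded below on {t ∈ ℂ : 0 < |t| < 1}; (ii) the convex hull of A in ℝⁿ is contained in the convex hull of B. -/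
private lemma zpow_sum' {ι : Type*} (t : ℂ) (ht : t ≠ 0) (s : Finset ι) (f : ι → ℤ) :
    t ^ (∑ i ∈ s, f i) = ∏ i ∈ s, t ^ f i := by
  induction s using Finset.cons_induction with
  | empty => simp
  | cons a s ha ih => rw [Finset.sum_cons, Finset.prod_cons, zpow_add₀ ht, ih]

private lemma term_eq {n : ℕ} {t : ℂ} (ht : t ≠ 0) (u b : Fin n → ℤ) (c : ℂ) :
    ‖(∏ i, (t ^ u i) ^ b i) * c‖ ^ 2
      = Real.exp ((2 * (∑ i, u i * b i : ℤ)) * Real.log ‖t‖) * ‖c‖ ^ 2 := by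
  have h1 : ∏ i, (t ^ u i) ^ b i = t ^ (∑ i, u i * b i) := by
    simp_rw [← zpow_mul]
    exact (zpow_sum' t ht _ _).symm
  have hr : (0:ℝ) < ‖t‖ := norm_pos_iff.mpr ht
  rw [h1, norm_mul, mul_pow, norm_zpow]
  congr 1
  have : ‖t‖ ^ (∑ i, u i * b i : ℤ) = Real.exp ((∑ i, u i * b i : ℤ) * Real.log ‖t‖) := by
    rw [← Real.rpow_intCast, Real.rpow_def_of_pos hr, mul_comm]
  rw [this, sq, ← Real.exp_add]
  ring_nf

private lemma log_sum_ge {n : ℕ} (u : Fin n → ℤ) {t : ℂ} (ht0 : 0 < ‖t‖)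
    {S : Finset (Fin n → ℤ)} {g : (Fin n → ℤ) → ℂ} {b₀ : Fin n → ℤ}
    (hb₀ : b₀ ∈ S) (hg0 : g b₀ ≠ 0) :
    2 * (∑ i, u i * b₀ i : ℤ) * Real.log ‖t‖ + Real.log (‖g b₀‖ ^ 2)
      ≤ Real.log (∑ b ∈ S, ‖(∏ i, (t ^ u i) ^ b i) * g b‖ ^ 2) := by
  have ht : t ≠ 0 := by simpa [norm_pos_iff] using ht0
  have hgpos : (0:ℝ) < ‖g b₀‖ ^ 2 := pow_pos (norm_pos_iff.mpr hg0) 2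
  have hterm : Real.exp ((2 * (∑ i, u i * b₀ i : ℤ)) * Real.log ‖t‖) * ‖g b₀‖ ^ 2
      ≤ ∑ b ∈ S, ‖(∏ i, (t ^ u i) ^ b i) * g b‖ ^ 2 := by
    rw [← term_eq ht u b₀ (g b₀)]
    exact Finset.single_le_sum (f := fun b => ‖(∏ i, (t ^ u i) ^ b i) * g b‖ ^ 2)
      (fun b _ => by positivity) hb₀
  calc 2 * (∑ i, u i * b₀ i : ℤ) * Real.log ‖t‖ + Real.log (‖g b₀‖ ^ 2)
      = Real.log (Real.exp ((2 * (∑ i, u i * b₀ i : ℤ)) * Real.log ‖t‖) * ‖g b₀‖ ^ 2) := by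
        rw [Real.log_mul (Real.exp_ne_zero _) (ne_of_gt hgpos), Real.log_exp]
    _ ≤ _ := Real.log_le_log (by positivity) hterm

private lemma log_sum_le {n : ℕ} (u : Fin n → ℤ) {t : ℂ} (ht0 : 0 < ‖t‖) (ht1 : ‖t‖ < 1)
    {S : Finset (Fin n → ℤ)} (hS : S.Nonempty) {g : (Fin n → ℤ) → ℂ}
    (hg : ∀ b ∈ S, g b ≠ 0) {m : ℤ} (hm : ∀ b ∈ S, m ≤ ∑ i, u i * b i) :
    Real.log (∑ b ∈ S, ‖(∏ i, (t ^ u i) ^ b i) * g b‖ ^ 2)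
      ≤ 2 * m * Real.log ‖t‖ + Real.log (∑ b ∈ S, ‖g b‖ ^ 2) := by
  have ht : t ≠ 0 := by simpa [norm_pos_iff] using ht0
  have hL : Real.log ‖t‖ < 0 := Real.log_neg ht0 ht1
  obtain ⟨b₁, hb₁⟩ := hS
  have hpos : (0:ℝ) < ∑ b ∈ S, ‖(∏ i, (t ^ u i) ^ b i) * g b‖ ^ 2 := by
    have : (0:ℝ) < ‖(∏ i, (t ^ u i) ^ b₁ i) * g b₁‖ ^ 2 := by
      have : (∏ i, (t ^ u i) ^ b₁ i) * g b₁ ≠ 0 :=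
        mul_ne_zero (Finset.prod_ne_zero_iff.mpr fun i _ => zpow_ne_zero _ (zpow_ne_zero _ ht)) (hg b₁ hb₁)
      exact pow_pos (norm_pos_iff.mpr this) 2
    exact Finset.sum_pos' (fun b _ => by positivity) ⟨b₁, hb₁, this⟩
  have hgpos : (0:ℝ) < ∑ b ∈ S, ‖g b‖ ^ 2 := by
    refine Finset.sum_pos' (fun b _ => by positivity) ⟨b₁, hb₁, ?_⟩
    exact pow_pos (norm_pos_iff.mpr (hg b₁ hb₁)) 2
  have hsum : ∑ b ∈ S, ‖(∏ i, (t ^ u i) ^ b i) * g b‖ ^ 2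
      ≤ Real.exp (2 * m * Real.log ‖t‖) * ∑ b ∈ S, ‖g b‖ ^ 2 := by
    rw [Finset.mul_sum]
    refine Finset.sum_le_sum fun b hb => ?_
    rw [term_eq ht u b (g b)]
    have : (2 * (∑ i, u i * b i : ℤ) : ℝ) * Real.log ‖t‖ ≤ 2 * m * Real.log ‖t‖ := by
      have h2 : (2 * m : ℝ) ≤ 2 * (∑ i, u i * b i : ℤ) := by
        have := hm b hb; exact_mod_cast by linarith
      nlinarith
    have := Real.exp_le_exp.mpr this
    nlinarith [sq_nonneg ‖g b‖, Real.exp_pos ((2 * (∑ i, u i * b i : ℤ) : ℝ) * Real.log ‖t‖)]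
  calc Real.log (∑ b ∈ S, ‖(∏ i, (t ^ u i) ^ b i) * g b‖ ^ 2)
      ≤ Real.log (Real.exp (2 * m * Real.log ‖t‖) * ∑ b ∈ S, ‖g b‖ ^ 2) :=
        Real.log_le_log hpos hsum
    _ = 2 * m * Real.log ‖t‖ + Real.log (∑ b ∈ S, ‖g b‖ ^ 2) := by
        rw [Real.log_mul (Real.exp_ne_zero _) (ne_of_gt hgpos), Real.log_exp]

/-- The torus energy of a pair is bounded below along every algebraic one-parameter
subgroup `λ^u(t) = (t^{u₁},…,t^{uₙ})` (on the punctured unit disc) iff the convex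
hull of `A` is contained in the convex hull of `B` (numerical semistability). -/
theorem torus_energy_one_param_bdd_iff_convexHull_subset {n : ℕ}
    (A B : Finset (Fin n → ℤ)) (hA : A.Nonempty) (hB : B.Nonempty)
    (v w : (Fin n → ℤ) → ℂ) (hv : ∀ a ∈ A, v a ≠ 0) (hw : ∀ b ∈ B, w b ≠ 0) :
    (∀ u : Fin n → ℤ, ∃ C : ℝ, ∀ t : ℂ, 0 < ‖t‖ → ‖t‖ < 1 →
      C ≤ Real.log (∑ b ∈ B, ‖(∏ i, (t ^ u i) ^ b i) * w b‖ ^ 2) -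
          Real.log (∑ a ∈ A, ‖(∏ i, (t ^ u i) ^ a i) * v a‖ ^ 2)) ↔
    convexHull ℝ ((fun a : Fin n → ℤ => fun i => (a i : ℝ)) '' ↑A) ⊆
      convexHull ℝ ((fun a : Fin n → ℤ => fun i => (a i : ℝ)) '' ↑B) := by
  constructor
  · intro h
    apply convexHull_min ?_ (convex_convexHull ℝ _)
    rintro x ⟨a, haA, rfl⟩
    by_contra hx
    have hBcl : IsClosed (convexHull ℝ ((fun a : Fin n → ℤ => fun i => (a i : ℝ)) '' ↑B)) :=
      ((B.finite_toSet.image _).isCompact_convexHull (𝕜 := ℝ)).isClosed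
    obtain ⟨f, s, hfa, hfs⟩ :=
      geometric_hahn_banach_point_closed (convex_convexHull ℝ _) hBcl hx
    set c : Fin n → ℝ := fun i => f (fun j => if i = j then 1 else 0) with hc
    have hfval : ∀ y : Fin n → ℝ, f y = ∑ i, y i * c i := by
      intro y
      have := LinearMap.pi_apply_eq_sum_univ (f.toLinearMap) y
      simpa [smul_eq_mul, hc] using this
    set g : ℝ := s - f (fun i => (a i : ℝ)) with hgdef
    have hg : 0 < g := by simp only [hgdef]; linarith
    set M : ℝ := (∑ i, |(a i : ℝ)|) + ∑ b ∈ B, ∑ i, |(b i : ℝ)| with hMdef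
    have habs_nonneg : (0:ℝ) ≤ ∑ i, |(a i : ℝ)| := Finset.sum_nonneg fun i _ => abs_nonneg _
    have hM : ∀ b ∈ B, (1/2) * ((∑ i, |(a i : ℝ)|) + ∑ i, |(b i : ℝ)|) ≤ M := by
      intro b hbB
      have h1 : ∑ i, |(b i : ℝ)| ≤ ∑ b' ∈ B, ∑ i, |(b' i : ℝ)| :=
        Finset.single_le_sum (f := fun b' => ∑ i, |(b' i : ℝ)|)
          (fun b' _ => Finset.sum_nonneg fun i _ => abs_nonneg _) hbB
      have h2 : (0:ℝ) ≤ ∑ i, |(b i : ℝ)| := Finset.sum_nonneg fun i _ => abs_nonneg _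
      simp only [hMdef]; linarith
    have hM0 : (0:ℝ) ≤ M := by
      have := hM _ hB.choose_spec
      have h2 : (0:ℝ) ≤ ∑ i, |((hB.choose) i : ℝ)| := Finset.sum_nonneg fun i _ => abs_nonneg _
      linarith
    set K : ℝ := (M + 1) / g with hKdef
    have hKg : K * g = M + 1 := div_mul_cancel₀ _ (ne_of_gt hg)
    set u : Fin n → ℤ := fun i => round (K * c i) with hu
    have herr : ∀ y : Fin n → ℝ, |(∑ i, (u i : ℝ) * y i) - K * f y| ≤ (1/2) * ∑ i, |y i| := by
      intro y
      rw [hfval y, Finset.mul_sum]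
      rw [← Finset.sum_sub_distrib]
      calc |∑ i, ((u i : ℝ) * y i - K * (y i * c i))| ≤ ∑ i, |(u i : ℝ) * y i - K * (y i * c i)| :=
            Finset.abs_sum_le_sum_abs _ _
        _ ≤ ∑ i, (1/2) * |y i| := by
            refine Finset.sum_le_sum fun i _ => ?_
            have : (u i : ℝ) * y i - K * (y i * c i) = ((u i : ℝ) - K * c i) * y i := by ring
            rw [this, abs_mul]
            have hr : |(u i : ℝ) - K * c i| ≤ 1/2 := by
              rw [hu]
              have := abs_sub_round (K * c i)
              rw [abs_sub_comm] at this
              exact this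
            exact mul_le_mul_of_nonneg_right hr (abs_nonneg _) |>.trans_eq rfl
        _ = (1/2) * ∑ i, |y i| := by rw [Finset.mul_sum]
    have hsep : ∀ b ∈ B, (∑ i, u i * a i) + 1 ≤ ∑ i, u i * b i := by
      intro b hbB
      have hfb : s < f (fun i => (b i : ℝ)) := hfs _ (subset_convexHull ℝ _ ⟨b, hbB, rfl⟩)
      have e1 := herr (fun i => (a i : ℝ))
      have e2 := herr (fun i => (b i : ℝ))
      have hMb := hM b hbB
      have hKpos : 0 ≤ K := le_of_lt (div_pos (by linarith) hg)
      have hfd : g ≤ f (fun i => (b i : ℝ)) - f (fun i => (a i : ℝ)) := by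
        simp only [hgdef]; linarith
      have hreal : (∑ i, (u i : ℝ) * (a i : ℝ)) + 1 ≤ ∑ i, (u i : ℝ) * (b i : ℝ) := by
        have hKfd : M + 1 ≤ K * (f (fun i => (b i : ℝ)) - f (fun i => (a i : ℝ))) := by
          calc M + 1 = K * g := hKg.symm
            _ ≤ _ := mul_le_mul_of_nonneg_left hfd hKpos
        have ha1 := abs_le.mp e1
        have hb1 := abs_le.mp e2
        nlinarith [ha1.1, ha1.2, hb1.1, hb1.2]
      exact_mod_cast hreal
    obtain ⟨C, hC⟩ := h u
    set K₀ : ℝ := Real.log (∑ b ∈ B, ‖w b‖ ^ 2) - Real.log (‖v a‖ ^ 2) with hK₀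
    set L₀ : ℝ := min ((C - K₀) / 2 - 1) (-1) with hL₀
    have hL₀neg : L₀ < 0 := lt_of_le_of_lt (min_le_right _ _) (by norm_num)
    set t : ℂ := (Real.exp L₀ : ℂ) with htdef
    have hnorm : ‖t‖ = Real.exp L₀ := by
      rw [htdef, Complex.norm_real, Real.norm_eq_abs, abs_of_pos (Real.exp_pos _)]
    have h0 : 0 < ‖t‖ := by rw [hnorm]; exact Real.exp_pos _
    have h1 : ‖t‖ < 1 := by rw [hnorm]; exact Real.exp_lt_one_iff.mpr hL₀neg
    have hlog : Real.log ‖t‖ = L₀ := by rw [hnorm, Real.log_exp]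
    have hCt := hC t h0 h1
    have upper := log_sum_le u h0 h1 hB hw hsep
    have lower := log_sum_ge u h0 haA (hv a haA)
    rw [hlog] at upper lower
    have hcast : ((∑ i, u i * a i + 1 : ℤ) : ℝ) = ((∑ i, u i * a i : ℤ) : ℝ) + 1 := by push_cast; ring
    rw [hcast] at upper
    have hup : L₀ ≤ (C - K₀) / 2 - 1 := min_le_left _ _
    simp only [hK₀] at *
    linarith
  · intro hsub u
    obtain ⟨b₀, hb₀B, hmin⟩ := B.exists_min_image (fun b => ∑ i, u i * b i) hB
    have hA' : ∀ a ∈ A, (∑ i, u i * b₀ i) ≤ ∑ i, u i * a i := by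
      intro a ha
      have hx : (fun i => (a i : ℝ)) ∈
          convexHull ℝ ((fun a : Fin n → ℤ => fun i => (a i : ℝ)) '' ↑B) :=
        hsub (subset_convexHull ℝ _ ⟨a, ha, rfl⟩)
      have hlin : IsLinearMap ℝ (fun y : Fin n → ℝ => ∑ i, (u i : ℝ) * y i) := by
        constructor
        · intro x y; simp [mul_add, Finset.sum_add_distrib]
        · intro c x; simp only [Pi.smul_apply, smul_eq_mul, Finset.mul_sum]; congr 1; ext i; ring
      have hhalf : convexHull ℝ ((fun a : Fin n → ℤ => fun i => (a i : ℝ)) '' ↑B)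
          ⊆ {y : Fin n → ℝ | ((∑ i, u i * b₀ i : ℤ) : ℝ) ≤ ∑ i, (u i : ℝ) * y i} := by
        apply convexHull_min
        · rintro y ⟨b, hbB, rfl⟩
          have := hmin b hbB
          simp only [Set.mem_setOf_eq]
          push_cast
          exact_mod_cast this
        · exact convex_halfSpace_ge hlin _
      have := hhalf hx
      simp only [Set.mem_setOf_eq] at this
      exact_mod_cast this
    refine ⟨Real.log (‖w b₀‖ ^ 2) - Real.log (∑ a ∈ A, ‖v a‖ ^ 2), fun t h0 h1 => ?_⟩
    have lower := log_sum_ge u h0 hb₀B (hw b₀ hb₀B)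
    have upper := log_sum_le u h0 h1 hA hv hA'
    linarith
end

section
/- Let A and B be nonempty finite subsets of ℤⁿ, and let v : A → ℂ and w : B → ℂ satisfy v(a) ≠ 0 for every a ∈ A and w(b) ≠ 0 for every b ∈ B. For t ∈ (ℂ∖{0})ⁿ define ν(t) := log(Σ_{b∈B} |t^b · w(b)|²) − log(Σ_{a∈A} |t^a · v(a)|²). If ν is not bounded below on (ℂ∖{0})ⁿ, then there exists u ∈ ℤⁿ such that ν(λ^u(t)) → −∞ as t → 0 (t ∈ ℂ, t ≠ 0), where λ^u(t) := (t^{u_1},…,t^{u_n}). In other words, for algebraic tori, if the energy is unbounded below then it already degenerates to −∞ along some algebraic one-parameter subgroup. -/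
open Finset Filter Real

private lemma zpow_sum₀' {M : Type*} [CommGroupWithZero M] {t : M} (ht : t ≠ 0)
    {ι : Type*} (s : Finset ι) (f : ι → ℤ) :
    t ^ (∑ i ∈ s, f i) = ∏ i ∈ s, t ^ f i := by
  classical
  induction s using Finset.induction with
  | empty => simp
  | insert _ _ h ih => rw [Finset.sum_insert h, Finset.prod_insert h, zpow_add₀ ht, ih]

private lemma norm_sq_eq_one_param {n : ℕ} {t : ℂ} (ht : t ≠ 0) (u a : Fin n → ℤ) (x : ℂ) :
    ‖(∏ i, (t ^ u i) ^ a i) * x‖ ^ 2 = ‖t‖ ^ (2 * ∑ i, u i * a i) * ‖x‖ ^ 2 := by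
  have h1 : (∏ i, (t ^ u i) ^ a i) = t ^ (∑ i, u i * a i) := by
    rw [zpow_sum₀' ht]
    exact Finset.prod_congr rfl fun i _ => (zpow_mul t (u i) (a i)).symm
  rw [h1, norm_mul, mul_pow, norm_zpow, ← zpow_natCast (‖t‖ ^ (∑ i, u i * a i)) 2,
    ← zpow_mul, mul_comm (∑ i, u i * a i)]
  norm_num

private lemma norm_sq_eq_torus {n : ℕ} {t : Fin n → ℂ} (ht : ∀ i, t i ≠ 0) (a : Fin n → ℤ)
    (x : ℂ) :
    ‖(∏ i, t i ^ a i) * x‖ ^ 2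
      = Real.exp (∑ i, (2 * Real.log ‖t i‖) * a i) * ‖x‖ ^ 2 := by
  rw [norm_mul, mul_pow, norm_prod, ← Finset.prod_pow, Real.exp_sum]
  congr 1
  refine Finset.prod_congr rfl fun i _ => ?_
  have hpos : 0 < ‖t i‖ := norm_pos_iff.mpr (ht i)
  rw [norm_zpow, ← zpow_natCast (‖t i‖ ^ a i) 2, ← zpow_mul,
    show (a i) * (2:ℕ) = 2 * a i by ring]
  rw [← Real.rpow_intCast ‖t i‖ (2 * a i), Real.rpow_def_of_pos hpos]
  push_cast
  ring_nf

private lemma tendsto_of_inf_lt {n : ℕ}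
    (A B : Finset (Fin n → ℤ)) (hA : A.Nonempty) (hB : B.Nonempty)
    (v w : (Fin n → ℤ) → ℂ) (hv : ∀ a ∈ A, v a ≠ 0) (hw : ∀ b ∈ B, w b ≠ 0)
    (u : Fin n → ℤ)
    (hlt : A.inf' hA (fun a => ∑ i, u i * a i) < B.inf' hB (fun b => ∑ i, u i * b i)) :
    Filter.Tendsto (fun t : ℂ =>
        Real.log (∑ b ∈ B, ‖(∏ i, (t ^ u i) ^ b i) * w b‖ ^ 2) -
        Real.log (∑ a ∈ A, ‖(∏ i, (t ^ u i) ^ a i) * v a‖ ^ 2))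
      (nhdsWithin 0 {0}ᶜ) Filter.atBot := by
  set mA : ℤ := A.inf' hA (fun a => ∑ i, u i * a i) with hmA
  set mB : ℤ := B.inf' hB (fun b => ∑ i, u i * b i) with hmB
  obtain ⟨a₀, ha₀, ha₀eq⟩ := Finset.exists_mem_eq_inf' hA (fun a => ∑ i, u i * a i)
  have hva₀ : (0:ℝ) < ‖v a₀‖ ^ 2 := pow_pos (norm_pos_iff.mpr (hv a₀ ha₀)) 2
  have hW : (0:ℝ) < ∑ b ∈ B, ‖w b‖ ^ 2 := by
    exact Finset.sum_pos (fun b hb => pow_pos (norm_pos_iff.mpr (hw b hb)) 2) hB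
  set c : ℝ := 2 * ((mB : ℝ) - (mA : ℝ)) with hc
  have hcpos : 0 < c := by
    have : (mA : ℝ) < (mB : ℝ) := by exact_mod_cast hlt
    simp only [hc]; linarith
  set K : ℝ := Real.log (∑ b ∈ B, ‖w b‖ ^ 2) - Real.log (‖v a₀‖ ^ 2) with hK
  have hlog : Tendsto (fun t : ℂ => Real.log ‖t‖) (nhdsWithin 0 {0}ᶜ) atBot := by
    apply Real.tendsto_log_nhdsNE_zero.comp
    rw [tendsto_nhdsWithin_iff]
    constructor
    · have : Tendsto (fun t : ℂ => ‖t‖) (nhds 0) (nhds 0) := by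
        simpa using (continuous_norm.tendsto (0:ℂ))
      exact this.mono_left nhdsWithin_le_nhds
    · filter_upwards [self_mem_nhdsWithin] with t ht
      simpa using ht
  have hg : Tendsto (fun t : ℂ => c * Real.log ‖t‖ + K) (nhdsWithin 0 {0}ᶜ) atBot := by
    apply tendsto_atBot_add_const_right
    exact (tendsto_const_mul_atBot_of_pos hcpos).mpr hlog
  refine tendsto_atBot_mono' _ ?_ hg
  have h1 : ∀ᶠ t : ℂ in nhdsWithin 0 {0}ᶜ, t ≠ 0 := by
    filter_upwards [self_mem_nhdsWithin] with t ht; simpa using ht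
  have h2 : ∀ᶠ t : ℂ in nhdsWithin 0 {0}ᶜ, ‖t‖ ≤ 1 := by
    have : Tendsto (fun t : ℂ => ‖t‖) (nhds 0) (nhds 0) := by
      simpa using (continuous_norm.tendsto (0:ℂ))
    have := (this.mono_left (nhdsWithin_le_nhds (s := {0}ᶜ))).eventually_lt_const zero_lt_one
    filter_upwards [this] with t ht; exact ht.le
  filter_upwards [h1, h2] with t ht htle
  have hr : (0:ℝ) < ‖t‖ := norm_pos_iff.mpr ht
  -- rewrite the sums
  have eB : (∑ b ∈ B, ‖(∏ i, (t ^ u i) ^ b i) * w b‖ ^ 2)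
      = ∑ b ∈ B, ‖t‖ ^ (2 * ∑ i, u i * b i) * ‖w b‖ ^ 2 :=
    Finset.sum_congr rfl fun b _ => norm_sq_eq_one_param ht u b (w b)
  have eA : (∑ a ∈ A, ‖(∏ i, (t ^ u i) ^ a i) * v a‖ ^ 2)
      = ∑ a ∈ A, ‖t‖ ^ (2 * ∑ i, u i * a i) * ‖v a‖ ^ 2 :=
    Finset.sum_congr rfl fun a _ => norm_sq_eq_one_param ht u a (v a)
  rw [eA, eB]
  -- numerator bound
  have hnum : Real.log (∑ b ∈ B, ‖t‖ ^ (2 * ∑ i, u i * b i) * ‖w b‖ ^ 2)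
      ≤ ((2 * mB : ℤ) : ℝ) * Real.log ‖t‖ + Real.log (∑ b ∈ B, ‖w b‖ ^ 2) := by
    have hle : (∑ b ∈ B, ‖t‖ ^ (2 * ∑ i, u i * b i) * ‖w b‖ ^ 2)
        ≤ ‖t‖ ^ (2 * mB) * ∑ b ∈ B, ‖w b‖ ^ 2 := by
      rw [Finset.mul_sum]
      refine Finset.sum_le_sum fun b hb => ?_
      have hble : 2 * mB ≤ 2 * ∑ i, u i * b i := by
        have h := Finset.inf'_le (fun x => ∑ i, u i * x i) hb
        rw [← hmB] at h
        linarith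
      have := zpow_le_zpow_right_of_le_one₀ hr htle hble
      nlinarith [sq_nonneg ‖w b‖]
    have hpos : (0:ℝ) < ∑ b ∈ B, ‖t‖ ^ (2 * ∑ i, u i * b i) * ‖w b‖ ^ 2 := by
      refine Finset.sum_pos (fun b hb => ?_) hB
      exact mul_pos (zpow_pos hr _) (pow_pos (norm_pos_iff.mpr (hw b hb)) 2)
    calc Real.log (∑ b ∈ B, ‖t‖ ^ (2 * ∑ i, u i * b i) * ‖w b‖ ^ 2)
        ≤ Real.log (‖t‖ ^ (2 * mB) * ∑ b ∈ B, ‖w b‖ ^ 2) := Real.log_le_log hpos hle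
      _ = ((2 * mB : ℤ) : ℝ) * Real.log ‖t‖ + Real.log (∑ b ∈ B, ‖w b‖ ^ 2) := by
          rw [Real.log_mul (by positivity) (ne_of_gt hW), Real.log_zpow]
  -- denominator bound
  have hden : ((2 * mA : ℤ) : ℝ) * Real.log ‖t‖ + Real.log (‖v a₀‖ ^ 2)
      ≤ Real.log (∑ a ∈ A, ‖t‖ ^ (2 * ∑ i, u i * a i) * ‖v a‖ ^ 2) := by
    have hle : ‖t‖ ^ (2 * mA) * ‖v a₀‖ ^ 2
        ≤ ∑ a ∈ A, ‖t‖ ^ (2 * ∑ i, u i * a i) * ‖v a‖ ^ 2 := by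
      have := Finset.single_le_sum (f := fun a => ‖t‖ ^ (2 * ∑ i, u i * a i) * ‖v a‖ ^ 2)
        (fun a _ => mul_nonneg (zpow_pos hr _).le (sq_nonneg _)) ha₀
      calc ‖t‖ ^ (2 * mA) * ‖v a₀‖ ^ 2
          = ‖t‖ ^ (2 * ∑ i, u i * a₀ i) * ‖v a₀‖ ^ 2 := by rw [hmA, ha₀eq]
        _ ≤ _ := this
    calc ((2 * mA : ℤ) : ℝ) * Real.log ‖t‖ + Real.log (‖v a₀‖ ^ 2)
        = Real.log (‖t‖ ^ (2 * mA) * ‖v a₀‖ ^ 2) := by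
          rw [Real.log_mul (by positivity) (ne_of_gt hva₀), Real.log_zpow]
      _ ≤ _ := Real.log_le_log (mul_pos (zpow_pos hr _) hva₀) hle
  have hKc : ((2 * mB : ℤ) : ℝ) * Real.log ‖t‖ - ((2 * mA : ℤ) : ℝ) * Real.log ‖t‖
      = c * Real.log ‖t‖ := by push_cast [hc]; ring
  linarith [hnum, hden, hKc, hK]

private lemma inf'_neg_eq {ι : Type*} (s : Finset ι) (hs : s.Nonempty) (f : ι → ℤ) :
    s.inf' hs (fun i => - f i) = - s.sup' hs f := by
  apply le_antisymm
  · obtain ⟨i, hi, hieq⟩ := Finset.exists_mem_eq_sup' hs f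
    rw [hieq]
    exact Finset.inf'_le _ hi
  · rw [Finset.le_inf'_iff]
    intro i hi
    exact neg_le_neg (Finset.le_sup' f hi)

private lemma real_sup_le {n : ℕ} (A B : Finset (Fin n → ℤ)) (hA : A.Nonempty) (hB : B.Nonempty)
    (h : ∀ u : Fin n → ℤ,
      A.sup' hA (fun a => ∑ i, u i * a i) ≤ B.sup' hB (fun b => ∑ i, u i * b i))
    (s : Fin n → ℝ) :
    A.sup' hA (fun a => ∑ i, s i * (a i : ℝ)) ≤ B.sup' hB (fun b => ∑ i, s i * (b i : ℝ)) := by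
  have cA : Continuous (fun s : Fin n → ℝ => A.sup' hA (fun a => ∑ i, s i * (a i : ℝ))) := by
    refine Continuous.finset_sup'_apply hA fun a _ => ?_
    exact continuous_finset_sum _ fun i _ => (continuous_apply i).mul continuous_const
  have cB : Continuous (fun s : Fin n → ℝ => B.sup' hB (fun b => ∑ i, s i * (b i : ℝ))) := by
    refine Continuous.finset_sup'_apply hB fun b _ => ?_
    exact continuous_finset_sum _ fun i _ => (continuous_apply i).mul continuous_const
  have hclosed : IsClosed {s : Fin n → ℝ |
      A.sup' hA (fun a => ∑ i, s i * (a i : ℝ)) ≤ B.sup' hB (fun b => ∑ i, s i * (b i : ℝ))} :=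
    isClosed_le cA cB
  have hdense : Dense {s : Fin n → ℝ | ∀ i, ∃ q : ℚ, (q : ℝ) = s i} := by
    have hd := dense_pi (ι := Fin n) (α := fun _ => ℝ)
      (s := fun _ => Set.range ((↑) : ℚ → ℝ)) Set.univ (fun i _ => Rat.denseRange_cast)
    convert hd using 1
    ext x
    simp [Set.mem_pi, Set.mem_range]
  have hsub : {s : Fin n → ℝ | ∀ i, ∃ q : ℚ, (q : ℝ) = s i} ⊆ {s : Fin n → ℝ |
      A.sup' hA (fun a => ∑ i, s i * (a i : ℝ)) ≤ B.sup' hB (fun b => ∑ i, s i * (b i : ℝ))} := by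
    intro s hs
    choose q hq using hs
    set d : ℕ := ∏ i, (q i).den with hd
    have hd0 : 0 < d := Finset.prod_pos fun i _ => (q i).pos
    set z : Fin n → ℤ := fun i => (q i).num * ((d : ℤ) / ((q i).den : ℤ)) with hz
    have hzval : ∀ i, (z i : ℝ) = (d : ℝ) * s i := by
      intro i
      have hdvd : ((q i).den : ℤ) ∣ (d : ℤ) :=
        Int.natCast_dvd_natCast.mpr (Finset.dvd_prod_of_mem _ (Finset.mem_univ i))
      obtain ⟨c, hc⟩ := hdvd
      have hden0 : ((q i).den : ℤ) ≠ 0 := by exact_mod_cast (q i).den_nz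
      have hzz : z i = (q i).num * c := by
        rw [hz]; simp only []
        rw [hc, Int.mul_ediv_cancel_left _ hden0]
      rw [← hq i, hzz]
      have hq' : ((q i) : ℝ) = ((q i).num : ℝ) / ((q i).den : ℝ) := by
        exact_mod_cast (Rat.cast_def (K := ℝ) (q i))
      have hcast : ((d:ℕ):ℝ) = ((q i).den : ℝ) * (c : ℝ) := by exact_mod_cast congrArg (fun x : ℤ => (x : ℝ)) hc
      have hden0' : ((q i).den : ℝ) ≠ 0 := by exact_mod_cast (q i).den_nz
      push_cast at hcast ⊢
      rw [hq', hcast]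
      field_simp
    have hdpos : (0:ℝ) < (d:ℝ) := by exact_mod_cast hd0
    show A.sup' hA (fun a => ∑ i, s i * (a i : ℝ)) ≤ B.sup' hB (fun b => ∑ i, s i * (b i : ℝ))
    rw [← mul_le_mul_iff_right₀ hdpos]
    have e : ∀ (C : Finset (Fin n → ℤ)) (hC : C.Nonempty),
        (d:ℝ) * C.sup' hC (fun a => ∑ i, s i * (a i : ℝ))
          = ((C.sup' hC (fun a => ∑ i, z i * a i) : ℤ) : ℝ) := by
      intro C hC
      rw [Finset.mul₀_sup' hdpos.le]
      rw [Finset.comp_sup'_eq_sup'_comp hC (fun m : ℤ => (m:ℝ))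
        (fun x y => by exact_mod_cast Int.cast_max)]
      refine Finset.sup'_congr hC rfl fun a _ => ?_
      show (d:ℝ) * ∑ i, s i * (a i : ℝ) = ((∑ i, z i * a i : ℤ) : ℝ)
      rw [Finset.mul_sum]
      push_cast
      refine Finset.sum_congr rfl fun i _ => ?_
      rw [← mul_assoc, ← hzval i]
    rw [e A hA, e B hB]
    exact_mod_cast h z
  exact hclosed.closure_subset_iff.mpr hsub (hdense s)

private lemma exists_lower_bound {n : ℕ}
    (A B : Finset (Fin n → ℤ)) (hA : A.Nonempty) (hB : B.Nonempty)
    (v w : (Fin n → ℤ) → ℂ) (hv : ∀ a ∈ A, v a ≠ 0) (hw : ∀ b ∈ B, w b ≠ 0)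
    (hkey : ∀ s : Fin n → ℝ,
      A.sup' hA (fun a => ∑ i, s i * (a i : ℝ)) ≤ B.sup' hB (fun b => ∑ i, s i * (b i : ℝ))) :
    ∃ C : ℝ, ∀ t : Fin n → ℂ, (∀ i, t i ≠ 0) →
      C ≤ Real.log (∑ b ∈ B, ‖(∏ i, t i ^ b i) * w b‖ ^ 2) -
          Real.log (∑ a ∈ A, ‖(∏ i, t i ^ a i) * v a‖ ^ 2) := by
  have hV : (0:ℝ) < ∑ a ∈ A, ‖v a‖ ^ 2 :=
    Finset.sum_pos (fun a ha => pow_pos (norm_pos_iff.mpr (hv a ha)) 2) hA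
  have hinfpos : (0:ℝ) < B.inf' hB fun b => ‖w b‖ ^ 2 := by
    rw [Finset.lt_inf'_iff]
    exact fun b hb => pow_pos (norm_pos_iff.mpr (hw b hb)) 2
  refine ⟨Real.log (B.inf' hB fun b => ‖w b‖ ^ 2) - Real.log (∑ a ∈ A, ‖v a‖ ^ 2), ?_⟩
  intro t ht
  set s : Fin n → ℝ := fun i => 2 * Real.log ‖t i‖ with hs
  have eB : (∑ b ∈ B, ‖(∏ i, t i ^ b i) * w b‖ ^ 2)
      = ∑ b ∈ B, Real.exp (∑ i, s i * (b i : ℝ)) * ‖w b‖ ^ 2 :=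
    Finset.sum_congr rfl fun b _ => norm_sq_eq_torus ht b (w b)
  have eA : (∑ a ∈ A, ‖(∏ i, t i ^ a i) * v a‖ ^ 2)
      = ∑ a ∈ A, Real.exp (∑ i, s i * (a i : ℝ)) * ‖v a‖ ^ 2 :=
    Finset.sum_congr rfl fun a _ => norm_sq_eq_torus ht a (v a)
  rw [eA, eB]
  set FA : ℝ := A.sup' hA (fun a => ∑ i, s i * (a i : ℝ)) with hFA
  set FB : ℝ := B.sup' hB (fun b => ∑ i, s i * (b i : ℝ)) with hFB
  have hFAB : FA ≤ FB := hkey s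
  obtain ⟨b₀, hb₀, hb₀eq⟩ := Finset.exists_mem_eq_sup' hB (fun b => ∑ i, s i * (b i : ℝ))
  -- numerator lower bound
  have hnum : Real.exp FB * (B.inf' hB fun b => ‖w b‖ ^ 2)
      ≤ ∑ b ∈ B, Real.exp (∑ i, s i * (b i : ℝ)) * ‖w b‖ ^ 2 := by
    have h1 : Real.exp FB * (B.inf' hB fun b => ‖w b‖ ^ 2)
        ≤ Real.exp (∑ i, s i * (b₀ i : ℝ)) * ‖w b₀‖ ^ 2 := by
      rw [hFB, hb₀eq]
      exact mul_le_mul_of_nonneg_left (Finset.inf'_le _ hb₀) (Real.exp_pos _).le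
    refine h1.trans (Finset.single_le_sum (f := fun b => Real.exp (∑ i, s i * (b i:ℝ)) * ‖w b‖ ^ 2)
      (fun b _ => mul_nonneg (Real.exp_pos _).le (sq_nonneg _)) hb₀)
  -- denominator upper bound
  have hden : (∑ a ∈ A, Real.exp (∑ i, s i * (a i : ℝ)) * ‖v a‖ ^ 2)
      ≤ Real.exp FA * ∑ a ∈ A, ‖v a‖ ^ 2 := by
    rw [Finset.mul_sum]
    refine Finset.sum_le_sum fun a ha => ?_
    exact mul_le_mul_of_nonneg_right
      (Real.exp_le_exp.mpr (Finset.le_sup' (fun a => ∑ i, s i * (a i:ℝ)) ha)) (sq_nonneg _)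
  have hnumpos : (0:ℝ) < ∑ b ∈ B, Real.exp (∑ i, s i * (b i : ℝ)) * ‖w b‖ ^ 2 :=
    Finset.sum_pos (fun b hb => mul_pos (Real.exp_pos _) (pow_pos (norm_pos_iff.mpr (hw b hb)) 2)) hB
  have hdenpos : (0:ℝ) < ∑ a ∈ A, Real.exp (∑ i, s i * (a i : ℝ)) * ‖v a‖ ^ 2 :=
    Finset.sum_pos (fun a ha => mul_pos (Real.exp_pos _) (pow_pos (norm_pos_iff.mpr (hv a ha)) 2)) hA
  have l1 : Real.log (Real.exp FB * (B.inf' hB fun b => ‖w b‖ ^ 2))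
      ≤ Real.log (∑ b ∈ B, Real.exp (∑ i, s i * (b i : ℝ)) * ‖w b‖ ^ 2) :=
    Real.log_le_log (mul_pos (Real.exp_pos _) hinfpos) hnum
  have l2 : Real.log (∑ a ∈ A, Real.exp (∑ i, s i * (a i : ℝ)) * ‖v a‖ ^ 2)
      ≤ Real.log (Real.exp FA * ∑ a ∈ A, ‖v a‖ ^ 2) :=
    Real.log_le_log hdenpos hden
  rw [Real.log_mul (Real.exp_ne_zero _) (ne_of_gt hinfpos), Real.log_exp] at l1
  rw [Real.log_mul (Real.exp_ne_zero _) (ne_of_gt hV), Real.log_exp] at l2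
  linarith

/-- For algebraic tori, if the energy of a pair is unbounded below on `(ℂ∖{0})ⁿ`
then it already degenerates to `−∞` along some algebraic one-parameter subgroup
`λ^u(t) = (t^{u₁},…,t^{uₙ})` as `t → 0`. -/
theorem torus_energy_unbounded_exists_one_param {n : ℕ}
    (A B : Finset (Fin n → ℤ)) (hA : A.Nonempty) (hB : B.Nonempty)
    (v w : (Fin n → ℤ) → ℂ) (hv : ∀ a ∈ A, v a ≠ 0) (hw : ∀ b ∈ B, w b ≠ 0)
    (hub : ¬ ∃ C : ℝ, ∀ t : Fin n → ℂ, (∀ i, t i ≠ 0) →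
      C ≤ Real.log (∑ b ∈ B, ‖(∏ i, t i ^ b i) * w b‖ ^ 2) -
          Real.log (∑ a ∈ A, ‖(∏ i, t i ^ a i) * v a‖ ^ 2)) :
    ∃ u : Fin n → ℤ,
      Filter.Tendsto (fun t : ℂ =>
          Real.log (∑ b ∈ B, ‖(∏ i, (t ^ u i) ^ b i) * w b‖ ^ 2) -
          Real.log (∑ a ∈ A, ‖(∏ i, (t ^ u i) ^ a i) * v a‖ ^ 2))
        (nhdsWithin 0 {0}ᶜ) Filter.atBot := by
  by_contra hcon
  push_neg at hcon
  apply hub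
  have hint : ∀ u : Fin n → ℤ,
      A.sup' hA (fun a => ∑ i, u i * a i) ≤ B.sup' hB (fun b => ∑ i, u i * b i) := by
    intro u
    by_contra hlt'
    push_neg at hlt'
    refine hcon (fun i => - u i) (tendsto_of_inf_lt A B hA hB v w hv hw _ ?_)
    have e1 : (fun a : Fin n → ℤ => ∑ i, (fun j => - u j) i * a i)
        = fun a => - (∑ i, u i * a i) := by
      funext a
      simp [neg_mul, Finset.sum_neg_distrib]
    rw [show (A.inf' hA fun a => ∑ i, (fun j => - u j) i * a i)
        = A.inf' hA fun a => - (∑ i, u i * a i) from by rw [e1]]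
    rw [show (B.inf' hB fun b => ∑ i, (fun j => - u j) i * b i)
        = B.inf' hB fun b => - (∑ i, u i * b i) from by rw [e1]]
    rw [inf'_neg_eq, inf'_neg_eq]
    exact neg_lt_neg hlt'
  exact exists_lower_bound A B hA hB v w hv hw (real_sup_le A B hA hB hint)
end

section
/- Let A be a nonempty finite subset of ℤⁿ, let B ⊆ A with A∖B nonempty, and let u ∈ ℤⁿ. Set m := min({0} ∪ {⟨u,a⟩ : a ∈ A}). Consider the curve c(t) ∈ ℂ × (A → ℂ) defined for t ∈ ℂ∖{0} by c(t) := (t^{−m}, (t^{⟨u,a⟩−m})_{a∈A}). Then c(t) converges as t → 0 to the nonzero vector L whose first coordinate is 1 if m = 0 and 0 otherwise, and whose a-coordinate is 1 if ⟨u,a⟩ = m and 0 otherwise. Moreover, the first coordinate of L vanishes and L_b = 0 for every b ∈ B if and only if min_{a∈A∖B} ⟨u,a⟩ < min({0} ∪ {⟨u,b⟩ : b ∈ B}). -/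
private lemma zpow_tendsto_aux (e : ℤ) (he : 0 ≤ e) :
    Filter.Tendsto (fun t : ℂ => t ^ e) (nhdsWithin 0 {0}ᶜ)
      (nhds (if e = 0 then 1 else 0)) := by
  have h : ∀ t : ℂ, t ^ e = t ^ e.toNat := fun t => by
    rw [← zpow_natCast, Int.toNat_of_nonneg he]
  simp only [h]
  have h1 : Filter.Tendsto (fun t : ℂ => t ^ e.toNat) (nhds 0) (nhds ((0:ℂ) ^ e.toNat)) :=
    (continuous_pow e.toNat).tendsto 0
  have h2 : Filter.Tendsto (fun t : ℂ => t ^ e.toNat) (nhdsWithin 0 {0}ᶜ)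
      (nhds ((0:ℂ) ^ e.toNat)) := h1.mono_left nhdsWithin_le_nhds
  convert h2 using 2
  rw [zero_pow_eq]
  congr 1
  rw [eq_iff_iff, Int.toNat_eq_zero]
  omega

/-- Boundary limits of torus orbits: the normalized curve
`c(t) = (t^{−m}, (t^{⟨u,a⟩−m})_{a∈A})`, with `m = min({0} ∪ {⟨u,a⟩ : a ∈ A})`,
converges as `t → 0` to the nonzero vector `L` with first coordinate `1` if `m = 0`
and `0` otherwise, and `a`-coordinate `1` if `⟨u,a⟩ = m` and `0` otherwise.
Moreover `L` lies in the projectivized kernel of the equivariant projection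
(`L₁ = 0` and `L_b = 0` for all `b ∈ B`) iff
`min_{a∈A∖B} ⟨u,a⟩ < min({0} ∪ {⟨u,b⟩ : b ∈ B})`. -/
theorem torus_boundary_limit {n : ℕ} (A B : Finset (Fin n → ℤ)) (hA : A.Nonempty)
    (hBA : B ⊆ A) (hAB : (A \ B).Nonempty) (u : Fin n → ℤ)
    (p : (Fin n → ℤ) → ℤ) (hp : p = fun a => ∑ i, u i * a i)
    (m : ℤ) (hm : m = (insert 0 (A.image p)).min' (Finset.insert_nonempty _ _))
    (L : ℂ × (↥A → ℂ))
    (hL : L = ((if m = 0 then 1 else 0 : ℂ),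
      fun a : ↥A => if p ↑a = m then (1 : ℂ) else 0)) :
    Filter.Tendsto (fun t : ℂ => ((t ^ (-m) : ℂ), fun a : ↥A => t ^ (p ↑a - m)))
        (nhdsWithin 0 {0}ᶜ) (nhds L) ∧
    L ≠ 0 ∧
    ((L.1 = 0 ∧ ∀ b : ↥A, (↑b ∈ B) → L.2 b = 0) ↔
      (A \ B).inf' hAB p < (insert 0 (B.image p)).min' (Finset.insert_nonempty _ _)) := by
  have hm0 : m ≤ 0 := hm ▸ Finset.min'_le _ _ (Finset.mem_insert_self _ _)
  have hmA : ∀ a ∈ A, m ≤ p a := fun a ha =>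
    hm ▸ Finset.min'_le _ _ (Finset.mem_insert_of_mem (Finset.mem_image_of_mem p ha))
  have hmem : m = 0 ∨ ∃ a ∈ A, p a = m := by
    have : m ∈ insert 0 (A.image p) := hm ▸ Finset.min'_mem _ _
    rcases Finset.mem_insert.1 this with h | h
    · exact Or.inl h
    · obtain ⟨a, ha, hpa⟩ := Finset.mem_image.1 h
      exact Or.inr ⟨a, ha, hpa⟩
  refine ⟨?_, ?_, ?_⟩
  · rw [hL]
    rw [nhds_prod_eq]
    refine Filter.Tendsto.prodMk ?_ ?_
    · have := zpow_tendsto_aux (-m) (neg_nonneg.2 hm0)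
      simpa [neg_eq_zero] using this
    · rw [tendsto_pi_nhds]
      intro a
      have := zpow_tendsto_aux (p ↑a - m) (sub_nonneg.2 (hmA _ a.2))
      simpa [sub_eq_zero] using this
  · rw [hL]
    rcases hmem with h | hex
    · intro hc
      have := congrArg Prod.fst hc
      simp [h] at this
    · obtain ⟨a, ha, hpa⟩ := hex
      intro hc
      have := congrArg (fun z => z.2 ⟨a, ha⟩) hc
      simp [hpa] at this
  · set M := (insert 0 (B.image p)).min' (Finset.insert_nonempty _ _) with hM
    set mS := (A \ B).inf' hAB p with hmS
    have hM0 : M ≤ 0 := Finset.min'_le _ _ (Finset.mem_insert_self _ _)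
    have hMB : ∀ b ∈ B, M ≤ p b := fun b hb =>
      Finset.min'_le _ _ (Finset.mem_insert_of_mem (Finset.mem_image_of_mem p hb))
    have hMmem : M = 0 ∨ ∃ b ∈ B, p b = M := by
      have : M ∈ insert 0 (B.image p) := Finset.min'_mem _ _
      rcases Finset.mem_insert.1 this with h | h
      · exact Or.inl h
      · obtain ⟨b, hb, hpb⟩ := Finset.mem_image.1 h
        exact Or.inr ⟨b, hb, hpb⟩
    have hmSmem : ∃ a ∈ A \ B, p a = mS := by
      obtain ⟨a, ha, hpa⟩ := Finset.exists_mem_eq_inf' hAB p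
      exact ⟨a, ha, hpa.symm⟩
    have hmSle : ∀ a ∈ A \ B, mS ≤ p a := fun a ha => Finset.inf'_le p ha
    have hmle : m ≤ mS := by
      obtain ⟨a, ha, hpa⟩ := hmSmem
      exact hpa ▸ hmA a (Finset.mem_sdiff.1 ha).1
    have hmleM : m ≤ M := by
      rcases hMmem with h | hex
      · exact h ▸ hm0
      · obtain ⟨b, hb, hpb⟩ := hex
        exact hpb ▸ hmA b (hBA hb)
    rw [hL]
    simp only [ite_eq_right_iff, one_ne_zero, imp_false]
    constructor
    · rintro ⟨h0, hB⟩
      rcases hmem with h | hex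
      · exact absurd h h0
      · obtain ⟨a, ha, hpa⟩ := hex
        have haB : a ∉ B := fun hb => (hB ⟨a, ha⟩ hb) hpa
        have hS : mS ≤ m := hpa ▸ hmSle a (Finset.mem_sdiff.2 ⟨ha, haB⟩)
        have hne : m ≠ M := by
          rcases hMmem with h | hex2
          · exact fun he => h0 (he.trans h)
          · obtain ⟨b, hb, hpb⟩ := hex2
            exact fun he => (hB ⟨b, hBA hb⟩ hb) (hpb.trans he.symm)
        exact lt_of_le_of_lt hS (lt_of_le_of_ne hmleM hne)
    · intro hlt
      have hgem : mS ≤ m := by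
        rw [hm]
        apply Finset.le_min'
        intro y hy
        rcases Finset.mem_insert.1 hy with h | h
        · exact h ▸ le_of_lt (lt_of_lt_of_le hlt hM0)
        · obtain ⟨a, ha, hpa⟩ := Finset.mem_image.1 h
          by_cases hb : a ∈ B
          · exact hpa ▸ le_of_lt (lt_of_lt_of_le hlt (hMB a hb))
          · exact hpa ▸ hmSle a (Finset.mem_sdiff.2 ⟨ha, hb⟩)
      have hmeq : m = mS := le_antisymm hmle hgem
      have hmltM : m < M := hmeq ▸ hlt
      refine ⟨fun h => absurd (h ▸ hM0) (not_le.2 (h ▸ hmltM)), ?_⟩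
      intro b hb hpb
      exact absurd (hpb ▸ hMB (↑b) hb) (not_le.2 hmltM)
end
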